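/- arXiv:1005.1726 — 3 statements merged into one kernel-verified Lean document; each statement's English description precedes it below -/
import Mathlib

section
/- Let G = (V,E) be a finite simple graph and s(G) = (G^1, G^2, X) a splitting of G. Then for all set partitions β, γ of X: x^{|β|} · T(G, β, γ; x) = Σ_{(γ^1, γ^2): γ^1 ∨ γ^2 = γ} T(G^1, β, γ^1; x) · T(G^2, β, γ^2; x), where the sum is over all pairs of set partitions γ^1, γ^2 of X whose join in the partition lattice of X equals γ. -/
open Finset

variable {V : Type*} [Fintype V] [DecidableEq V]

/-- `P` is a set partition of the finset `U`, given as a finset of (nonempty,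
pairwise disjoint, covering) blocks contained in `U`. -/
def IsPartitionOn (U : Finset V) (P : Finset (Finset V)) : Prop :=
  ∅ ∉ P ∧ (∀ B ∈ P, B ⊆ U) ∧ ∀ v ∈ U, ∃! B : Finset V, B ∈ P ∧ v ∈ B

/-- Refinement order on set partitions: every block of `P` lies in a block of `R`. -/
def PartLE (P R : Finset (Finset V)) : Prop :=
  ∀ B ∈ P, ∃ C ∈ R, B ⊆ C

/-- `γ` is the join (least upper bound in the refinement order on partitions of `X`)
of the partitions `γ1` and `γ2` of `X`. -/
def IsJoin (X : Finset V) (γ1 γ2 γ : Finset (Finset V)) : Prop :=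
  PartLE γ1 γ ∧ PartLE γ2 γ ∧
    ∀ δ : Finset (Finset V), IsPartitionOn X δ → PartLE γ1 δ → PartLE γ2 δ → PartLE γ δ

/-- The graph consisting of all edges between distinct vertices of `X`;
`H ⊔ cliqueOn X` is the graph `H_X` of the paper. -/
def cliqueOn (X : Finset V) : SimpleGraph V :=
  SimpleGraph.fromRel (fun u v => u ∈ X ∧ v ∈ X)

/-- `u` and `v` are joined by a walk of `H` all of whose vertices lie in `B`. -/
def ReachIn (H : SimpleGraph V) (B : Finset V) (u v : V) : Prop :=
  ∃ p : H.Walk u v, ∀ w ∈ p.support, w ∈ B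

open scoped Classical in
/-- `{H[P]}`: the partition induced by `P` via the connected components of the
subgraphs of `H` induced by the blocks of `P`. -/
noncomputable def indPart (H : SimpleGraph V) (P : Finset (Finset V)) :
    Finset (Finset V) :=
  P.biUnion (fun B => B.image (fun v => B.filter (fun w => ReachIn H B v w)))

open scoped Classical in
/-- `P ⊓ W`: the partition induced on `W` by the nonempty traces of blocks of `P`. -/
noncomputable def restrictPart (P : Finset (Finset V)) (W : Finset V) :
    Finset (Finset V) :=
  (P.image (fun B => B ∩ W)).filter (fun B => B.Nonempty)

open scoped Classical in
/-- `T(H,β,γ;x)`: the sum of `x^{|π|}` over all connected set partitions `π` of the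
graph `H_X` (on the vertex set `U`) with `π ⊓ X = β` and `{H[π]} ⊓ X = γ`. -/
noncomputable def T (H : SimpleGraph V) (U X : Finset V)
    (β γ : Finset (Finset V)) (x : ℤ) : ℤ :=
  ∑ P ∈ Finset.univ.filter (fun P : Finset (Finset V) =>
      IsPartitionOn U P ∧
      (∀ B ∈ P, ((H ⊔ cliqueOn X).induce (B : Set V)).Connected) ∧
      restrictPart P X = β ∧ restrictPart (indPart H P) X = γ),
    x ^ P.card


/-!
Restricting a connected partition `π` of `G_X` with `π ⊓ X = β` to `V¹` and `V²` gives connected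
partitions `π¹`, `π²` of `G¹_X`, `G²_X` with the same trace `β`. Conversely `π¹` and `π²` glue
back to `π`: merge the two blocks through each block of `β`, keep the blocks that avoid `X`.
This is a bijection because a connected block of `G_X` that avoids `X` cannot meet both `V¹` and
`V²`. For the same reason exactly the blocks of `π` that meet `X` are counted twice in
`|π¹| + |π²|`, so `|π¹| + |π²| = |β| + |π|`. Finally `{G[π]} ⊓ X = {G¹[π¹]} ⊓ X ∨ {G²[π²]} ⊓ X`:
a walk of `G` between two vertices of `X` splits, at its visits to `X`, into walks of `G¹` or of
`G²`. Summing `x^(|π¹| + |π²|)` over the fibres of `(γ¹, γ²)` gives the formula.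
-/

section Basic

omit [Fintype V] [DecidableEq V]

variable {H H' : SimpleGraph V} {U B B' C : Finset V} {P R : Finset (Finset V)} {u v w : V}

namespace ReachIn

theorem refl (hu : u ∈ B) : ReachIn H B u u :=
  ⟨.nil, by simpa using hu⟩

theorem start_mem (h : ReachIn H B u v) : u ∈ B :=
  h.elim fun p hp => hp u p.start_mem_support

theorem end_mem (h : ReachIn H B u v) : v ∈ B :=
  h.elim fun p hp => hp v p.end_mem_support

theorem symm (h : ReachIn H B u v) : ReachIn H B v u :=
  h.elim fun p hp => ⟨p.reverse, by simpa using hp⟩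

theorem trans (h : ReachIn H B u v) (h' : ReachIn H B v w) : ReachIn H B u w := by
  obtain ⟨p, hp⟩ := h
  obtain ⟨q, hq⟩ := h'
  refine ⟨p.append q, fun z hz => ?_⟩
  rcases SimpleGraph.Walk.mem_support_append_iff _ _ |>.1 hz with hz | hz
  exacts [hp z hz, hq z hz]

theorem of_adj (huv : H.Adj u v) (hu : u ∈ B) (hv : v ∈ B) : ReachIn H B u v :=
  ⟨SimpleGraph.Walk.cons huv SimpleGraph.Walk.nil, by simp [hu, hv]⟩

theorem mono (hH : H ≤ H') (hB : B ⊆ B') (h : ReachIn H B u v) : ReachIn H' B' u v :=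
  h.elim fun p hp => ⟨p.mapLe hH, fun z hz => hB <| hp z <| by
    rwa [SimpleGraph.Walk.support_mapLe_eq_support] at hz⟩

end ReachIn

open scoped Classical in
theorem filter_reachIn_eq_filter_reachIn (h : ReachIn H B u v) :
    B.filter (fun w => ReachIn H B u w) = B.filter (fun w => ReachIn H B v w) :=
  filter_congr fun _ _ => ⟨h.symm.trans, h.trans⟩

theorem connected_induce_iff_reachIn :
    (H.induce (B : Set V)).Connected ↔ B.Nonempty ∧ ∀ u ∈ B, ∀ v ∈ B, ReachIn H B u v := by
  rw [SimpleGraph.connected_iff, SimpleGraph.Preconnected, Set.nonempty_coe_sort, coe_nonempty]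
  refine ⟨fun ⟨h, hne⟩ => ⟨hne, fun u hu v hv => ?_⟩, fun ⟨hne, h⟩ => ⟨?_, hne⟩⟩
  · obtain ⟨p⟩ := h ⟨u, hu⟩ ⟨v, hv⟩
    refine ⟨p.map (SimpleGraph.Embedding.induce _).toHom, fun z hz => ?_⟩
    obtain ⟨z, -, rfl⟩ := List.mem_map.1 (SimpleGraph.Walk.support_map _ p ▸ hz)
    exact z.2
  · rintro ⟨u, hu⟩ ⟨v, hv⟩
    obtain ⟨p, hp⟩ := h u hu v hv
    exact ⟨p.induce _ hp⟩

theorem connected_induce_mono {s : Set V} (hH : H ≤ H') (h : (H.induce s).Connected) :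
    (H'.induce s).Connected :=
  h.mono fun _ _ h => hH h

theorem cliqueOn_adj {X : Finset V} : (cliqueOn X).Adj u v ↔ u ≠ v ∧ u ∈ X ∧ v ∈ X := by
  simp [cliqueOn, SimpleGraph.fromRel_adj, and_comm]

theorem reachIn_sup_cliqueOn {X : Finset V} (hu : u ∈ X) (hv : v ∈ X) (huB : u ∈ B)
    (hvB : v ∈ B) : ReachIn (H ⊔ cliqueOn X) B u v := by
  obtain rfl | huv := eq_or_ne u v
  · exact .refl huB
  · exact .of_adj (.inr (cliqueOn_adj.2 ⟨huv, hu, hv⟩)) huB hvB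

namespace IsPartitionOn

theorem mk' (hne : ∀ B ∈ P, B.Nonempty) (hsub : ∀ B ∈ P, B ⊆ U)
    (hcov : ∀ v ∈ U, ∃ B ∈ P, v ∈ B) (hdisj : ∀ B ∈ P, ∀ C ∈ P, ∀ v ∈ B, v ∈ C → B = C) :
    IsPartitionOn U P := by
  refine ⟨fun h => (hne ∅ h).ne_empty rfl, hsub, fun v hv => ?_⟩
  obtain ⟨B, hB, hvB⟩ := hcov v hv
  exact ⟨B, ⟨hB, hvB⟩, fun C ⟨hC, hvC⟩ => hdisj C hC B hB v hvC hvB⟩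

theorem nonempty_of_mem (h : IsPartitionOn U P) (hB : B ∈ P) : B.Nonempty :=
  nonempty_iff_ne_empty.2 fun hB' => h.1 (hB' ▸ hB)

theorem subset_of_mem (h : IsPartitionOn U P) (hB : B ∈ P) : B ⊆ U :=
  h.2.1 B hB

theorem exists_mem (h : IsPartitionOn U P) (hv : v ∈ U) : ∃ B ∈ P, v ∈ B :=
  (h.2.2 v hv).exists.elim fun B hB => ⟨B, hB⟩

theorem eq_of_mem (h : IsPartitionOn U P) (hB : B ∈ P) (hC : C ∈ P) (hvB : v ∈ B)
    (hvC : v ∈ C) : B = C :=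
  (h.2.2 v (h.subset_of_mem hB hvB)).unique ⟨hB, hvB⟩ ⟨hC, hvC⟩

theorem eq_of_subset (hP : IsPartitionOn U P) (hR : IsPartitionOn U R) (h : P ⊆ R) : P = R := by
  refine h.antisymm fun C hC => ?_
  obtain ⟨v, hv⟩ := hR.nonempty_of_mem hC
  obtain ⟨B, hB, hvB⟩ := hP.exists_mem (hR.subset_of_mem hC hv)
  rwa [← hR.eq_of_mem (h hB) hC hvB hv]

end IsPartitionOn

theorem PartLE.antisymm (hP : IsPartitionOn U P) (hR : IsPartitionOn U R) (h : PartLE P R)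
    (h' : PartLE R P) : P = R := by
  have key : ∀ {P R : Finset (Finset V)}, IsPartitionOn U P → PartLE P R → PartLE R P →
      P ⊆ R := by
    intro P R hP h h' B hB
    obtain ⟨C, hC, hBC⟩ := h B hB
    obtain ⟨B', hB', hCB'⟩ := h' C hC
    obtain ⟨v, hv⟩ := hP.nonempty_of_mem hB
    obtain rfl := hP.eq_of_mem hB hB' hv (hCB' (hBC hv))
    rwa [hBC.antisymm hCB']
  exact (key hP h h').antisymm (key hR h' h)

theorem IsJoin.unique {X : Finset V} {γ₁ γ₂ γ γ' : Finset (Finset V)} (h : IsJoin X γ₁ γ₂ γ)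
    (h' : IsJoin X γ₁ γ₂ γ') (hγ : IsPartitionOn X γ) (hγ' : IsPartitionOn X γ') : γ = γ' :=
  PartLE.antisymm hγ hγ' (h.2.2 γ' hγ' h'.1 h'.2.1) (h'.2.2 γ hγ h.1 h.2.1)

def SameBlock (P : Finset (Finset V)) (u v : V) : Prop :=
  ∃ D ∈ P, u ∈ D ∧ v ∈ D

theorem PartLE.sameBlock (h : PartLE P R) (huv : SameBlock P u v) : SameBlock R u v := by
  obtain ⟨D, hD, hu, hv⟩ := huv
  obtain ⟨E, hE, hDE⟩ := h D hD
  exact ⟨E, hE, hDE hu, hDE hv⟩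

theorem IsPartitionOn.sameBlock_trans (h : IsPartitionOn U P) (huv : SameBlock P u v)
    (hvw : SameBlock P v w) : SameBlock P u w := by
  obtain ⟨D, hD, hu, hv⟩ := huv
  obtain ⟨D', hD', hv', hw⟩ := hvw
  exact ⟨D, hD, hu, h.eq_of_mem hD' hD hv' hv ▸ hw⟩

end Basic

section Partitions

omit [Fintype V]

variable {U W X B C : Finset V} {H H' : SimpleGraph V} {P R δ : Finset (Finset V)} {x y : V}

theorem mem_restrictPart : C ∈ restrictPart P W ↔ (∃ B ∈ P, B ∩ W = C) ∧ C.Nonempty := by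
  simp [restrictPart]

theorem inter_mem_restrictPart (hB : B ∈ P) (hne : (B ∩ W).Nonempty) :
    B ∩ W ∈ restrictPart P W :=
  mem_restrictPart.2 ⟨⟨B, hB, rfl⟩, hne⟩

theorem restrictPart_isPartitionOn (h : IsPartitionOn U P) (hW : W ⊆ U) :
    IsPartitionOn W (restrictPart P W) := by
  refine .mk' (fun C hC => (mem_restrictPart.1 hC).2) (fun C hC => ?_) (fun v hv => ?_) ?_
  · obtain ⟨⟨B, -, rfl⟩, -⟩ := mem_restrictPart.1 hC
    exact inter_subset_right
  · obtain ⟨B, hB, hvB⟩ := h.exists_mem (hW hv)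
    exact ⟨B ∩ W, inter_mem_restrictPart hB ⟨v, mem_inter.2 ⟨hvB, hv⟩⟩, mem_inter.2 ⟨hvB, hv⟩⟩
  · intro C hC D hD v hvC hvD
    obtain ⟨⟨B, hB, rfl⟩, -⟩ := mem_restrictPart.1 hC
    obtain ⟨⟨B', hB', rfl⟩, -⟩ := mem_restrictPart.1 hD
    rw [h.eq_of_mem hB hB' (mem_inter.1 hvC).1 (mem_inter.1 hvD).1]

theorem restrictPart_restrictPart (hXW : X ⊆ W) :
    restrictPart (restrictPart P W) X = restrictPart P X := by
  have hBW : ∀ B : Finset V, B ∩ W ∩ X = B ∩ X := fun B => by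
    rw [inter_assoc, inter_eq_right.2 hXW]
  ext C
  simp only [mem_restrictPart]
  constructor
  · rintro ⟨⟨D, ⟨⟨B, hB, rfl⟩, -⟩, rfl⟩, hne⟩
    exact ⟨⟨B, hB, (hBW B).symm⟩, hne⟩
  · rintro ⟨⟨B, hB, rfl⟩, hne⟩
    exact ⟨⟨B ∩ W, ⟨⟨B, hB, rfl⟩, hne.mono (hBW B ▸ inter_subset_left)⟩, hBW B⟩, hne⟩

theorem partLE_restrictPart : PartLE (restrictPart P W) P := by
  intro C hC
  obtain ⟨⟨B, hB, rfl⟩, -⟩ := mem_restrictPart.1 hC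
  exact ⟨B, hB, inter_subset_left⟩

theorem card_restrictPart (h : IsPartitionOn U P) :
    #(restrictPart P W) = #{B ∈ P | (B ∩ W).Nonempty} := by
  rw [restrictPart, filter_image]
  refine card_image_of_injOn fun B hB B' hB' hBB' => ?_
  obtain ⟨v, hv⟩ := (mem_filter.1 hB).2
  have hv' : v ∈ B' ∩ W := hBB' ▸ hv
  exact h.eq_of_mem (mem_filter.1 hB).1 (mem_filter.1 hB').1 (mem_inter.1 hv).1
    (mem_inter.1 hv').1

open scoped Classical in
theorem mem_indPart :
    C ∈ indPart H P ↔ ∃ B ∈ P, ∃ v ∈ B, B.filter (fun w => ReachIn H B v w) = C := by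
  simp [indPart]

open scoped Classical in
theorem indPart_isPartitionOn (h : IsPartitionOn U P) : IsPartitionOn U (indPart H P) := by
  refine .mk' (fun C hC => ?_) (fun C hC => ?_) (fun v hv => ?_) ?_
  · obtain ⟨B, -, v, hv, rfl⟩ := mem_indPart.1 hC
    exact ⟨v, mem_filter.2 ⟨hv, .refl hv⟩⟩
  · obtain ⟨B, hB, v, -, rfl⟩ := mem_indPart.1 hC
    exact (filter_subset _ _).trans (h.subset_of_mem hB)
  · obtain ⟨B, hB, hvB⟩ := h.exists_mem hv
    exact ⟨_, mem_indPart.2 ⟨B, hB, v, hvB, rfl⟩, mem_filter.2 ⟨hvB, .refl hvB⟩⟩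
  · intro C hC D hD v hvC hvD
    obtain ⟨B, hB, a, -, rfl⟩ := mem_indPart.1 hC
    obtain ⟨B', hB', b, -, rfl⟩ := mem_indPart.1 hD
    obtain rfl := h.eq_of_mem hB hB' (mem_filter.1 hvC).1 (mem_filter.1 hvD).1
    rw [filter_reachIn_eq_filter_reachIn (mem_filter.1 hvC).2,
      filter_reachIn_eq_filter_reachIn (mem_filter.1 hvD).2]

open scoped Classical in
theorem mem_restrictPart_indPart :
    C ∈ restrictPart (indPart H P) X ↔
      (∃ B ∈ P, ∃ v ∈ B, B.filter (fun w => ReachIn H B v w) ∩ X = C) ∧ C.Nonempty := by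
  simp only [mem_restrictPart, mem_indPart]
  aesop

open scoped Classical in
theorem partLE_restrictPart_indPart (hH : H ≤ H') (hPR : PartLE P R) :
    PartLE (restrictPart (indPart H P) X) (restrictPart (indPart H' R) X) := by
  intro C hC
  obtain ⟨⟨B, hB, v, hv, rfl⟩, hne⟩ := mem_restrictPart_indPart.1 hC
  obtain ⟨B', hB', hBB'⟩ := hPR B hB
  have hsub : B.filter (fun w => ReachIn H B v w) ∩ X ⊆
      B'.filter (fun w => ReachIn H' B' v w) ∩ X :=
    inter_subset_inter_right fun w hw =>
      mem_filter.2 ⟨hBB' (mem_filter.1 hw).1, (mem_filter.1 hw).2.mono hH hBB'⟩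
  exact ⟨_, mem_restrictPart_indPart.2 ⟨⟨B', hB', v, hBB' hv, rfl⟩, hne.mono hsub⟩, hsub⟩

open scoped Classical in
theorem sameBlock_restrictPart_indPart (hB : B ∈ P) (hx : x ∈ X) (hy : y ∈ X)
    (h : ReachIn H B x y) : SameBlock (restrictPart (indPart H P) X) x y := by
  have hxC : x ∈ B.filter (fun w => ReachIn H B x w) ∩ X :=
    mem_inter.2 ⟨mem_filter.2 ⟨h.start_mem, .refl h.start_mem⟩, hx⟩
  have hyC : y ∈ B.filter (fun w => ReachIn H B x w) ∩ X :=
    mem_inter.2 ⟨mem_filter.2 ⟨h.end_mem, h⟩, hy⟩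
  exact ⟨_, mem_restrictPart_indPart.2 ⟨⟨B, hB, x, h.start_mem, rfl⟩, ⟨x, hxC⟩⟩, hxC, hyC⟩

theorem PartLE.sameBlock_of_reachIn (hle : PartLE (restrictPart (indPart H (restrictPart P W)) X) δ)
    (hB : B ∈ P) : ∀ x ∈ X, ∀ y ∈ X, ReachIn H (B ∩ W) x y → SameBlock δ x y :=
  fun x hx _ hy h => hle.sameBlock <|
    sameBlock_restrictPart_indPart (inter_mem_restrictPart hB ⟨x, h.start_mem⟩) hx hy h

open scoped Classical in
theorem exists_reachIn_of_mem_restrictPart_indPart (hC : C ∈ restrictPart (indPart H P) X)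
    (hx : x ∈ C) (hy : y ∈ C) : ∃ B ∈ P, ReachIn H B x y := by
  obtain ⟨⟨B, hB, v, -, rfl⟩, -⟩ := mem_restrictPart_indPart.1 hC
  simp only [mem_inter, mem_filter] at hx hy
  exact ⟨B, hB, hx.1.2.symm.trans hy.1.2⟩

end Partitions

section Gluing

omit [Fintype V]

variable {X V₁ V₂ B₁ B₂ M M' : Finset V} {P π₁ π₂ : Finset (Finset V)} {v : V}

def NoStraddle (V₁ V₂ X : Finset V) (P : Finset (Finset V)) : Prop :=
  ∀ B ∈ P, (B ∩ V₁).Nonempty → (B ∩ V₂).Nonempty → (B ∩ X).Nonempty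

theorem card_restrictPart_add_card_restrictPart (hX : V₁ ∩ V₂ = X)
    (h : IsPartitionOn (V₁ ∪ V₂) P) (hs : NoStraddle V₁ V₂ X P) :
    #(restrictPart P V₁) + #(restrictPart P V₂) = #(restrictPart P X) + #P := by
  have hXV₁ : X ⊆ V₁ := hX ▸ inter_subset_left
  have hXV₂ : X ⊆ V₂ := hX ▸ inter_subset_right
  have hcover : {B ∈ P | (B ∩ V₁).Nonempty ∨ (B ∩ V₂).Nonempty} = P := by
    refine filter_true_of_mem fun B hB => ?_
    obtain ⟨v, hv⟩ := h.nonempty_of_mem hB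
    rcases mem_union.1 (h.subset_of_mem hB hv) with hv₁ | hv₂
    exacts [.inl ⟨v, mem_inter.2 ⟨hv, hv₁⟩⟩, .inr ⟨v, mem_inter.2 ⟨hv, hv₂⟩⟩]
  have hboth :
      {B ∈ P | (B ∩ V₁).Nonempty ∧ (B ∩ V₂).Nonempty} = {B ∈ P | (B ∩ X).Nonempty} :=
    filter_congr fun B hB => ⟨fun h => hs B hB h.1 h.2, fun h =>
      ⟨h.mono (inter_subset_inter_left hXV₁), h.mono (inter_subset_inter_left hXV₂)⟩⟩
  rw [card_restrictPart h, card_restrictPart h, card_restrictPart h, ← hboth, add_comm _ #P,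
    filter_and, ← card_union_add_card_inter, ← filter_or, hcover]

-- Meant for `π₁ ⊓ X = π₂ ⊓ X`; then two blocks `B₁ ∈ π₁`, `B₂ ∈ π₂` meet iff they have the same
-- nonempty trace on `X`.
def gluePart (π₁ π₂ : Finset (Finset V)) (X : Finset V) : Finset (Finset V) :=
  ({p ∈ π₁ ×ˢ π₂ | (p.1 ∩ p.2).Nonempty}.image fun p => p.1 ∪ p.2) ∪
    {B ∈ π₁ | Disjoint B X} ∪ {B ∈ π₂ | Disjoint B X}

theorem mem_gluePart :
    M ∈ gluePart π₁ π₂ X ↔ (∃ B₁ ∈ π₁, ∃ B₂ ∈ π₂, (B₁ ∩ B₂).Nonempty ∧ B₁ ∪ B₂ = M) ∨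
      (M ∈ π₁ ∧ Disjoint M X) ∨ (M ∈ π₂ ∧ Disjoint M X) := by
  simp only [gluePart, mem_union, mem_image, mem_filter, mem_product, Prod.exists, and_assoc,
    exists_and_left, or_assoc]

theorem gluePart_comm : gluePart π₁ π₂ X = gluePart π₂ π₁ X := by
  ext M
  simp only [mem_gluePart]
  constructor <;>
  · rintro (⟨B₁, hB₁, B₂, hB₂, hne, rfl⟩ | h | h)
    exacts [.inl ⟨B₂, hB₂, B₁, hB₁, inter_comm B₁ B₂ ▸ hne, union_comm _ _⟩, .inr (.inr h),
      .inr (.inl h)]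

theorem inter_nonempty_of_subset (hX : V₁ ∩ V₂ = X) (hM : M ⊆ V₁) (h : (M ∩ V₂).Nonempty) :
    (M ∩ X).Nonempty := by
  obtain ⟨v, hv⟩ := h
  rw [mem_inter] at hv
  exact ⟨v, mem_inter.2 ⟨hv.1, hX ▸ mem_inter.2 ⟨hM hv.1, hv.2⟩⟩⟩

theorem inter_union_inter_eq (h : M ⊆ V₁ ∪ V₂) : M ∩ V₁ ∪ M ∩ V₂ = M := by
  rw [← inter_union_distrib_left, inter_eq_left.2 h]

theorem subset_of_mem_gluePart (h₁ : IsPartitionOn V₁ π₁) (h₂ : IsPartitionOn V₂ π₂)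
    (hM : M ∈ gluePart π₁ π₂ X) : M ⊆ V₁ ∪ V₂ := by
  rcases mem_gluePart.1 hM with ⟨B₁, hB₁, B₂, hB₂, -, rfl⟩ | ⟨hM, -⟩ | ⟨hM, -⟩
  · exact union_subset_union (h₁.subset_of_mem hB₁) (h₂.subset_of_mem hB₂)
  · exact (h₁.subset_of_mem hM).trans subset_union_left
  · exact (h₂.subset_of_mem hM).trans subset_union_right

theorem noStraddle_gluePart (h₁ : IsPartitionOn V₁ π₁) (h₂ : IsPartitionOn V₂ π₂)
    (hX : V₁ ∩ V₂ = X) : NoStraddle V₁ V₂ X (gluePart π₁ π₂ X) := by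
  intro M hM hM₁ hM₂
  rcases mem_gluePart.1 hM with ⟨B₁, hB₁, B₂, hB₂, ⟨v, hv⟩, rfl⟩ | ⟨hM, -⟩ | ⟨hM, -⟩
  · rw [mem_inter] at hv
    exact ⟨v, mem_inter.2 ⟨mem_union_left _ hv.1,
      hX ▸ mem_inter.2 ⟨h₁.subset_of_mem hB₁ hv.1, h₂.subset_of_mem hB₂ hv.2⟩⟩⟩
  · exact inter_nonempty_of_subset hX (h₁.subset_of_mem hM) hM₂
  · exact inter_nonempty_of_subset (inter_comm V₂ V₁ ▸ hX) (h₂.subset_of_mem hM) hM₁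

section
variable (h₁ : IsPartitionOn V₁ π₁) (h₂ : IsPartitionOn V₂ π₂) (hX : V₁ ∩ V₂ = X)
  (hπ : restrictPart π₁ X = restrictPart π₂ X)
include h₁ h₂ hX hπ

theorem inter_eq_inter_of_nonempty (hB₁ : B₁ ∈ π₁) (hB₂ : B₂ ∈ π₂)
    (hne : (B₁ ∩ B₂).Nonempty) : B₁ ∩ X = B₂ ∩ X := by
  obtain ⟨v, hv⟩ := hne
  rw [mem_inter] at hv
  have hvX : v ∈ X := hX ▸ mem_inter.2 ⟨h₁.subset_of_mem hB₁ hv.1, h₂.subset_of_mem hB₂ hv.2⟩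
  have hX₂ : IsPartitionOn X (restrictPart π₂ X) :=
    restrictPart_isPartitionOn h₂ (hX ▸ inter_subset_right)
  exact hX₂.eq_of_mem (hπ ▸ inter_mem_restrictPart hB₁ ⟨v, mem_inter.2 ⟨hv.1, hvX⟩⟩)
    (inter_mem_restrictPart hB₂ ⟨v, mem_inter.2 ⟨hv.2, hvX⟩⟩) (mem_inter.2 ⟨hv.1, hvX⟩)
    (mem_inter.2 ⟨hv.2, hvX⟩)

theorem union_inter_left_eq (hB₁ : B₁ ∈ π₁) (hB₂ : B₂ ∈ π₂) (hne : (B₁ ∩ B₂).Nonempty) :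
    (B₁ ∪ B₂) ∩ V₁ = B₁ := by
  rw [union_inter_distrib_right, inter_eq_left.2 (h₁.subset_of_mem hB₁), union_eq_left]
  intro z hz
  rw [mem_inter] at hz
  have hzX : z ∈ B₂ ∩ X :=
    mem_inter.2 ⟨hz.1, hX ▸ mem_inter.2 ⟨hz.2, h₂.subset_of_mem hB₂ hz.1⟩⟩
  rw [← inter_eq_inter_of_nonempty h₁ h₂ hX hπ hB₁ hB₂ hne] at hzX
  exact (mem_inter.1 hzX).1

theorem restrictPart_gluePart_left : restrictPart (gluePart π₁ π₂ X) V₁ = π₁ := by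
  ext C
  rw [mem_restrictPart]
  constructor
  · rintro ⟨⟨M, hM, rfl⟩, hne⟩
    rcases mem_gluePart.1 hM with ⟨B₁, hB₁, B₂, hB₂, hB, rfl⟩ | ⟨hM, -⟩ | ⟨hM, hMX⟩
    · rwa [union_inter_left_eq h₁ h₂ hX hπ hB₁ hB₂ hB]
    · rwa [inter_eq_left.2 (h₁.subset_of_mem hM)]
    · refine absurd hMX (not_disjoint_iff_nonempty_inter.2 ?_)
      exact inter_nonempty_of_subset (inter_comm V₂ V₁ ▸ hX) (h₂.subset_of_mem hM) hne
  · intro hC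
    refine ⟨?_, h₁.nonempty_of_mem hC⟩
    by_cases hCX : Disjoint C X
    · exact ⟨C, mem_gluePart.2 (.inr (.inl ⟨hC, hCX⟩)),
        inter_eq_left.2 (h₁.subset_of_mem hC)⟩
    · obtain ⟨x, hxC, hxX⟩ := not_disjoint_iff.1 hCX
      obtain ⟨B₂, hB₂, hxB₂⟩ := h₂.exists_mem ((hX ▸ inter_subset_right : X ⊆ V₂) hxX)
      have hne : (C ∩ B₂).Nonempty := ⟨x, mem_inter.2 ⟨hxC, hxB₂⟩⟩
      exact ⟨C ∪ B₂, mem_gluePart.2 (.inl ⟨C, hC, B₂, hB₂, hne, rfl⟩),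
        union_inter_left_eq h₁ h₂ hX hπ hC hB₂ hne⟩

theorem restrictPart_gluePart_right : restrictPart (gluePart π₁ π₂ X) V₂ = π₂ := by
  rw [gluePart_comm]
  exact restrictPart_gluePart_left h₂ h₁ (inter_comm V₂ V₁ ▸ hX) hπ.symm

theorem gluePart_eq_of_mem_left (hM : M ∈ gluePart π₁ π₂ X) (hM' : M' ∈ gluePart π₁ π₂ X)
    (hvM : v ∈ M) (hvM' : v ∈ M') (hv : v ∈ V₁) : M = M' := by
  have hXV₁ : X ⊆ V₁ := hX ▸ inter_subset_left
  have mem_left : ∀ {N}, N ∈ gluePart π₁ π₂ X → (N ∩ V₁).Nonempty → N ∩ V₁ ∈ π₁ :=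
    fun hN hne => restrictPart_gluePart_left h₁ h₂ hX hπ ▸ inter_mem_restrictPart hN hne
  have mem_right : ∀ {N}, N ∈ gluePart π₁ π₂ X → (N ∩ V₂).Nonempty → N ∩ V₂ ∈ π₂ :=
    fun hN hne => restrictPart_gluePart_right h₁ h₂ hX hπ ▸ inter_mem_restrictPart hN hne
  have hvM₁ : v ∈ M ∩ V₁ := mem_inter.2 ⟨hvM, hv⟩
  have hvM'₁ : v ∈ M' ∩ V₁ := mem_inter.2 ⟨hvM', hv⟩
  have h₁M : M ∩ V₁ = M' ∩ V₁ :=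
    h₁.eq_of_mem (mem_left hM ⟨v, hvM₁⟩) (mem_left hM' ⟨v, hvM'₁⟩) hvM₁ hvM'₁
  suffices h₂M : M ∩ V₂ = M' ∩ V₂ by
    rw [← inter_union_inter_eq (subset_of_mem_gluePart h₁ h₂ hM),
      ← inter_union_inter_eq (subset_of_mem_gluePart h₁ h₂ hM'), h₁M, h₂M]
  have hMX : M' ∩ X = M ∩ X := by
    rw [← inter_eq_right.2 hXV₁, ← inter_assoc, ← inter_assoc, h₁M]
  by_cases hne : (M ∩ X).Nonempty
  · obtain ⟨x, hx⟩ := hne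
    have hxV₂ : x ∈ V₂ := (hX ▸ inter_subset_right : X ⊆ V₂) (mem_inter.1 hx).2
    have hxM : x ∈ M ∩ V₂ := mem_inter.2 ⟨(mem_inter.1 hx).1, hxV₂⟩
    have hxM' : x ∈ M' ∩ V₂ := mem_inter.2 ⟨(mem_inter.1 (hMX ▸ hx)).1, hxV₂⟩
    exact h₂.eq_of_mem (mem_right hM ⟨x, hxM⟩) (mem_right hM' ⟨x, hxM'⟩) hxM hxM'
  · have hs := noStraddle_gluePart h₁ h₂ hX
    rw [not_nonempty_iff_eq_empty.1 fun h => hne (hs M hM ⟨v, hvM₁⟩ h),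
      not_nonempty_iff_eq_empty.1 fun h => hne (hMX ▸ hs M' hM' ⟨v, hvM'₁⟩ h)]

theorem gluePart_isPartitionOn : IsPartitionOn (V₁ ∪ V₂) (gluePart π₁ π₂ X) := by
  have hX' : V₂ ∩ V₁ = X := inter_comm V₂ V₁ ▸ hX
  refine .mk' (fun M hM => ?_) (fun M => subset_of_mem_gluePart h₁ h₂) (fun v hv => ?_) ?_
  · rcases mem_gluePart.1 hM with ⟨B₁, -, B₂, -, hne, rfl⟩ | ⟨hM, -⟩ | ⟨hM, -⟩
    exacts [hne.mono inter_subset_union, h₁.nonempty_of_mem hM, h₂.nonempty_of_mem hM]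
  · rcases mem_union.1 hv with hv | hv
    · obtain ⟨B, hB, hvB⟩ := h₁.exists_mem hv
      rw [← restrictPart_gluePart_left h₁ h₂ hX hπ] at hB
      obtain ⟨⟨M, hM, rfl⟩, -⟩ := mem_restrictPart.1 hB
      exact ⟨M, hM, (mem_inter.1 hvB).1⟩
    · obtain ⟨B, hB, hvB⟩ := h₂.exists_mem hv
      rw [← restrictPart_gluePart_right h₁ h₂ hX hπ] at hB
      obtain ⟨⟨M, hM, rfl⟩, -⟩ := mem_restrictPart.1 hB
      exact ⟨M, hM, (mem_inter.1 hvB).1⟩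
  · intro M hM M' hM' v hvM hvM'
    rcases mem_union.1 (subset_of_mem_gluePart h₁ h₂ hM hvM) with hv | hv
    · exact gluePart_eq_of_mem_left h₁ h₂ hX hπ hM hM' hvM hvM' hv
    · rw [gluePart_comm] at hM hM'
      exact gluePart_eq_of_mem_left h₂ h₁ hX' hπ.symm hM hM' hvM hvM' hv

end

theorem gluePart_restrictPart (hX : V₁ ∩ V₂ = X) (h : IsPartitionOn (V₁ ∪ V₂) P)
    (hs : NoStraddle V₁ V₂ X P) : gluePart (restrictPart P V₁) (restrictPart P V₂) X = P := by
  have hXV₁ : X ⊆ V₁ := hX ▸ inter_subset_left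
  have hXV₂ : X ⊆ V₂ := hX ▸ inter_subset_right
  have hglue := gluePart_isPartitionOn (restrictPart_isPartitionOn h subset_union_left)
    (restrictPart_isPartitionOn h subset_union_right) hX
    (by rw [restrictPart_restrictPart hXV₁, restrictPart_restrictPart hXV₂])
  refine (h.eq_of_subset hglue fun B hB => ?_).symm
  have hsplit := inter_union_inter_eq (h.subset_of_mem hB)
  rw [mem_gluePart]
  by_cases hBX : Disjoint B X
  · have hBX' : ¬(B ∩ X).Nonempty := fun hne => not_disjoint_iff_nonempty_inter.2 hne hBX
    by_cases h₂ : (B ∩ V₂).Nonempty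
    · rw [not_nonempty_iff_eq_empty.1 fun h₁ => hBX' (hs B hB h₁ h₂), empty_union] at hsplit
      exact .inr (.inr ⟨hsplit ▸ inter_mem_restrictPart hB h₂, hBX⟩)
    · rw [not_nonempty_iff_eq_empty.1 h₂, union_empty] at hsplit
      have h₁ : (B ∩ V₁).Nonempty := by rw [hsplit]; exact h.nonempty_of_mem hB
      exact .inr (.inl ⟨hsplit ▸ inter_mem_restrictPart hB h₁, hBX⟩)
  · obtain ⟨x, hxB, hxX⟩ := not_disjoint_iff.1 hBX
    have hx₁ : x ∈ B ∩ V₁ := mem_inter.2 ⟨hxB, hXV₁ hxX⟩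
    have hx₂ : x ∈ B ∩ V₂ := mem_inter.2 ⟨hxB, hXV₂ hxX⟩
    exact .inl ⟨_, inter_mem_restrictPart hB ⟨x, hx₁⟩, _, inter_mem_restrictPart hB ⟨x, hx₂⟩,
      ⟨x, mem_inter.2 ⟨hx₁, hx₂⟩⟩, hsplit⟩

end Gluing

section Splitting

omit [Fintype V]

def IsConnectedPartition (H : SimpleGraph V) (U X : Finset V) (β P : Finset (Finset V)) : Prop :=
  IsPartitionOn U P ∧ (∀ B ∈ P, ((H ⊔ cliqueOn X).induce (B : Set V)).Connected) ∧
    restrictPart P X = β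

structure IsSplitting (G G₁ G₂ : SimpleGraph V) (V₁ V₂ X : Finset V) : Prop where
  inter_eq : V₁ ∩ V₂ = X
  adj_left : ∀ u v, G₁.Adj u v → u ∈ V₁ ∧ v ∈ V₁
  adj_right : ∀ u v, G₂.Adj u v → u ∈ V₂ ∧ v ∈ V₂
  adj_iff : ∀ u v, G.Adj u v ↔ G₁.Adj u v ∨ G₂.Adj u v

namespace IsSplitting

variable {G G₁ G₂ : SimpleGraph V} {U V₁ V₂ X B : Finset V} {β δ P π₁ π₂ : Finset (Finset V)}
  {a b u v : V} (hs : IsSplitting G G₁ G₂ V₁ V₂ X)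
include hs

theorem symm : IsSplitting G G₂ G₁ V₂ V₁ X :=
  ⟨inter_comm V₂ V₁ ▸ hs.inter_eq, hs.adj_right, hs.adj_left,
    fun u v => (hs.adj_iff u v).trans or_comm⟩

theorem left_le : G₁ ≤ G := fun u v h => (hs.adj_iff u v).2 (.inl h)

theorem subset_left : X ⊆ V₁ := hs.inter_eq ▸ inter_subset_left

theorem mem_of_mem_of_mem (h₁ : u ∈ V₁) (h₂ : u ∈ V₂) : u ∈ X :=
  hs.inter_eq ▸ mem_inter.2 ⟨h₁, h₂⟩

theorem adj_sup_cliqueOn (h : (G ⊔ cliqueOn X).Adj a b) (ha : a ∈ V₁) :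
    ((G₁ ⊔ cliqueOn X).Adj a b ∧ b ∈ V₁) ∨ a ∈ X := by
  rcases h with h | h
  · rcases (hs.adj_iff a b).1 h with h | h
    · exact .inl ⟨.inl h, (hs.adj_left a b h).2⟩
    · exact .inr (hs.mem_of_mem_of_mem ha (hs.adj_right a b h).1)
  · exact .inl ⟨.inr h, hs.subset_left (cliqueOn_adj.1 h).2.2⟩

theorem reachIn_or_exists_reachIn (p : (G ⊔ cliqueOn X).Walk u v)
    (hp : ∀ w ∈ p.support, w ∈ B) (hu : u ∈ V₁) :
    ReachIn (G₁ ⊔ cliqueOn X) (B ∩ V₁) u v ∨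
      ∃ x ∈ B ∩ X, ReachIn (G₁ ⊔ cliqueOn X) (B ∩ V₁) u x := by
  induction p with
  | nil => exact .inl (.refl (mem_inter.2 ⟨hp _ (by simp), hu⟩))
  | @cons a b c hab q ih =>
    have ha : a ∈ B ∩ V₁ := mem_inter.2 ⟨hp a (by simp), hu⟩
    rcases hs.adj_sup_cliqueOn hab hu with ⟨hab, hb⟩ | haX
    · have hq : ∀ w ∈ q.support, w ∈ B := fun w hw => hp w (by simp [hw])
      have hab : ReachIn (G₁ ⊔ cliqueOn X) (B ∩ V₁) a b :=
        .of_adj hab ha (mem_inter.2 ⟨hq b q.start_mem_support, hb⟩)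
      rcases ih hq hb with h | ⟨x, hx, h⟩
      exacts [.inl (hab.trans h), .inr ⟨x, hx, hab.trans h⟩]
    · exact .inr ⟨a, mem_inter.2 ⟨(mem_inter.1 ha).1, haX⟩, .refl ha⟩

theorem connected_induce_inter_left (hB : ((G ⊔ cliqueOn X).induce (B : Set V)).Connected)
    (hne : (B ∩ V₁).Nonempty) :
    ((G₁ ⊔ cliqueOn X).induce ((B ∩ V₁ : Finset V) : Set V)).Connected := by
  rw [connected_induce_iff_reachIn] at hB ⊢
  refine ⟨hne, fun a ha b hb => ?_⟩
  have hXB : ∀ x ∈ B ∩ X, x ∈ B ∩ V₁ := fun x hx =>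
    mem_inter.2 ⟨(mem_inter.1 hx).1, hs.subset_left (mem_inter.1 hx).2⟩
  obtain ⟨p, hp⟩ := hB.2 a (mem_inter.1 ha).1 b (mem_inter.1 hb).1
  obtain ⟨q, hq⟩ := hB.2 b (mem_inter.1 hb).1 a (mem_inter.1 ha).1
  rcases hs.reachIn_or_exists_reachIn p hp (mem_inter.1 ha).2 with h | ⟨x, hx, hax⟩
  · exact h
  rcases hs.reachIn_or_exists_reachIn q hq (mem_inter.1 hb).2 with h | ⟨y, hy, hby⟩
  · exact h.symm
  exact hax.trans <| (reachIn_sup_cliqueOn (mem_inter.1 hx).2 (mem_inter.1 hy).2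
    (hXB x hx) (hXB y hy)).trans hby.symm

theorem noStraddle (hP : ∀ B ∈ P, ((G ⊔ cliqueOn X).induce (B : Set V)).Connected) :
    NoStraddle V₁ V₂ X P := by
  rintro B hB ⟨u, hu⟩ ⟨v, hv⟩
  rw [mem_inter] at hu hv
  obtain ⟨p, hp⟩ := (connected_induce_iff_reachIn.1 (hP B hB)).2 u hu.1 v hv.1
  rcases hs.reachIn_or_exists_reachIn p hp hu.2 with h | ⟨x, hx, -⟩
  · exact ⟨v, mem_inter.2 ⟨hv.1, hs.mem_of_mem_of_mem (mem_inter.1 h.end_mem).2 hv.2⟩⟩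
  · exact ⟨x, hx⟩

theorem exists_sameBlock_of_adj_left (hδ : IsPartitionOn X δ)
    (h₂ : ∀ x ∈ X, ∀ y ∈ X, ReachIn G₂ (B ∩ V₂) x y → SameBlock δ x y)
    (hab : G₁.Adj a b) (ha : a ∈ B)
    (hb : ∃ x ∈ X, SameBlock δ x v ∧ (ReachIn G₁ (B ∩ V₁) b x ∨ ReachIn G₂ (B ∩ V₂) b x)) :
    ∃ x ∈ X, SameBlock δ x v ∧ (ReachIn G₁ (B ∩ V₁) a x ∨ ReachIn G₂ (B ∩ V₂) a x) := by
  obtain ⟨x, hx, hxv, hbx⟩ := hb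
  have hbB : b ∈ B := hbx.elim (fun h => (mem_inter.1 h.start_mem).1)
    (fun h => (mem_inter.1 h.start_mem).1)
  have hab : ReachIn G₁ (B ∩ V₁) a b := .of_adj hab (mem_inter.2 ⟨ha, (hs.adj_left a b hab).1⟩)
    (mem_inter.2 ⟨hbB, (hs.adj_left a b hab).2⟩)
  rcases hbx with hbx | hbx
  · exact ⟨x, hx, hxv, .inl (hab.trans hbx)⟩
  · have hbX : b ∈ X :=
      hs.mem_of_mem_of_mem (mem_inter.1 hab.end_mem).2 (mem_inter.1 hbx.start_mem).2
    exact ⟨b, hbX, hδ.sameBlock_trans (h₂ b hbX x hx hbx) hxv, .inl hab⟩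

theorem exists_sameBlock_of_walk (hδ : IsPartitionOn X δ)
    (h₁ : ∀ x ∈ X, ∀ y ∈ X, ReachIn G₁ (B ∩ V₁) x y → SameBlock δ x y)
    (h₂ : ∀ x ∈ X, ∀ y ∈ X, ReachIn G₂ (B ∩ V₂) x y → SameBlock δ x y)
    (p : G.Walk u v) (hp : ∀ w ∈ p.support, w ∈ B) (hv : v ∈ X) :
    ∃ x ∈ X, SameBlock δ x v ∧ (ReachIn G₁ (B ∩ V₁) u x ∨ ReachIn G₂ (B ∩ V₂) u x) := by
  induction p with
  | @nil v =>
    obtain ⟨D, hD, hvD⟩ := hδ.exists_mem hv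
    have hvB : v ∈ B ∩ V₁ := mem_inter.2 ⟨hp _ (by simp), hs.subset_left hv⟩
    exact ⟨_, hv, ⟨D, hD, hvD, hvD⟩, .inl (.refl hvB)⟩
  | cons hab q ih =>
    have ha := hp _ (List.mem_cons_self ..)
    have hq := ih (fun w hw => hp w (by simp [hw])) hv
    rcases (hs.adj_iff _ _).1 hab with hab | hab
    · exact hs.exists_sameBlock_of_adj_left hδ h₂ hab ha hq
    · simpa only [or_comm] using
        hs.symm.exists_sameBlock_of_adj_left hδ h₁ hab ha (by simpa only [or_comm] using hq)

theorem isJoin (P : Finset (Finset V)) :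
    IsJoin X (restrictPart (indPart G₁ (restrictPart P V₁)) X)
      (restrictPart (indPart G₂ (restrictPart P V₂)) X) (restrictPart (indPart G P) X) := by
  refine ⟨partLE_restrictPart_indPart hs.left_le partLE_restrictPart,
    partLE_restrictPart_indPart hs.symm.left_le partLE_restrictPart,
    fun δ hδ hle₁ hle₂ C hC => ?_⟩
  obtain ⟨⟨_, -, rfl⟩, x₀, hx₀⟩ := mem_restrictPart.1 hC
  obtain ⟨D, hD, hx₀D⟩ := hδ.exists_mem (mem_inter.1 hx₀).2
  refine ⟨D, hD, fun y hy => ?_⟩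
  obtain ⟨B, hB, p, hp⟩ := exists_reachIn_of_mem_restrictPart_indPart hC hx₀ hy
  have h₁ := hle₁.sameBlock_of_reachIn hB
  have h₂ := hle₂.sameBlock_of_reachIn hB
  obtain ⟨x, hx, hxy, hx₀x⟩ := hs.exists_sameBlock_of_walk hδ h₁ h₂ p hp (mem_inter.1 hy).2
  have hx₀X := (mem_inter.1 hx₀).2
  obtain ⟨D', hD', hx₀D', hyD'⟩ :=
    hδ.sameBlock_trans (hx₀x.elim (h₁ x₀ hx₀X x hx) (h₂ x₀ hx₀X x hx)) hxy
  rwa [hδ.eq_of_mem hD hD' hx₀D hx₀D']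

theorem isConnectedPartition_restrictPart (h : IsConnectedPartition G U X β P)
    (hU : V₁ ⊆ U) : IsConnectedPartition G₁ V₁ X β (restrictPart P V₁) := by
  refine ⟨restrictPart_isPartitionOn h.1 hU, fun C hC => ?_,
    by rw [restrictPart_restrictPart hs.subset_left, h.2.2]⟩
  obtain ⟨⟨B, hB, rfl⟩, hne⟩ := mem_restrictPart.1 hC
  exact hs.connected_induce_inter_left (h.2.1 B hB) hne

section
variable (h₁ : IsConnectedPartition G₁ V₁ X β π₁) (h₂ : IsConnectedPartition G₂ V₂ X β π₂)
include h₁ h₂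

theorem restrictPart_gluePart :
    restrictPart (gluePart π₁ π₂ X) V₁ = π₁ ∧ restrictPart (gluePart π₁ π₂ X) V₂ = π₂ :=
  have hπ := h₁.2.2.trans h₂.2.2.symm
  ⟨restrictPart_gluePart_left h₁.1 h₂.1 hs.inter_eq hπ,
    restrictPart_gluePart_right h₁.1 h₂.1 hs.inter_eq hπ⟩

theorem isConnectedPartition_gluePart :
    IsConnectedPartition G (V₁ ∪ V₂) X β (gluePart π₁ π₂ X) := by
  have hπ := h₁.2.2.trans h₂.2.2.symm
  refine ⟨gluePart_isPartitionOn h₁.1 h₂.1 hs.inter_eq hπ, fun M hM => ?_, ?_⟩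
  · have hle₁ : G₁ ⊔ cliqueOn X ≤ G ⊔ cliqueOn X := sup_le_sup_right hs.left_le _
    have hle₂ : G₂ ⊔ cliqueOn X ≤ G ⊔ cliqueOn X := sup_le_sup_right hs.symm.left_le _
    rcases mem_gluePart.1 hM with ⟨B₁, hB₁, B₂, hB₂, hne, rfl⟩ | ⟨hM, -⟩ | ⟨hM, -⟩
    · rw [coe_union]
      exact SimpleGraph.induce_union_connected
        (connected_induce_mono hle₁ (h₁.2.1 B₁ hB₁)).preconnected
        (connected_induce_mono hle₂ (h₂.2.1 B₂ hB₂)).preconnected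
        (by rwa [← coe_inter, coe_nonempty])
    · exact connected_induce_mono hle₁ (h₁.2.1 M hM)
    · exact connected_induce_mono hle₂ (h₂.2.1 M hM)
  · rw [← restrictPart_restrictPart hs.subset_left, (hs.restrictPart_gluePart h₁ h₂).1, h₁.2.2]

theorem isJoin_gluePart :
    IsJoin X (restrictPart (indPart G₁ π₁) X) (restrictPart (indPart G₂ π₂) X)
      (restrictPart (indPart G (gluePart π₁ π₂ X)) X) := by
  obtain ⟨e₁, e₂⟩ := hs.restrictPart_gluePart h₁ h₂
  simpa only [e₁, e₂] using hs.isJoin (gluePart π₁ π₂ X)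

end

end IsSplitting

end Splitting

open scoped Classical in
theorem T_eq_sum (H : SimpleGraph V) (U X : Finset V) (β γ : Finset (Finset V)) (x : ℤ) :
    T H U X β γ x = ∑ P : Finset (Finset V) with IsConnectedPartition H U X β P ∧
      restrictPart (indPart H P) X = γ, x ^ #P := by
  simp only [T, IsConnectedPartition, and_assoc]

open scoped Classical in
theorem sum_T_mul_T {H₁ H₂ : SimpleGraph V} {V₁ V₂ X : Finset V} (hX₁ : X ⊆ V₁) (hX₂ : X ⊆ V₂)
    (β γ : Finset (Finset V)) (x : ℤ) :
    ∑ p ∈ univ.filter (fun p : Finset (Finset V) × Finset (Finset V) =>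
          IsPartitionOn X p.1 ∧ IsPartitionOn X p.2 ∧ IsJoin X p.1 p.2 γ),
        T H₁ V₁ X β p.1 x * T H₂ V₂ X β p.2 x =
      ∑ q ∈ univ.filter (IsConnectedPartition H₁ V₁ X β) ×ˢ
          univ.filter (IsConnectedPartition H₂ V₂ X β) with
          IsJoin X (restrictPart (indPart H₁ q.1) X) (restrictPart (indPart H₂ q.2) X) γ,
        x ^ (#q.1 + #q.2) := by
  set J := univ.filter (fun p : Finset (Finset V) × Finset (Finset V) =>
    IsPartitionOn X p.1 ∧ IsPartitionOn X p.2 ∧ IsJoin X p.1 p.2 γ)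
  set A := univ.filter (IsConnectedPartition H₁ V₁ X β) ×ˢ
    univ.filter (IsConnectedPartition H₂ V₂ X β)
  set g := fun q : Finset (Finset V) × Finset (Finset V) =>
    (restrictPart (indPart H₁ q.1) X, restrictPart (indPart H₂ q.2) X)
  calc _ = ∑ p ∈ J, ∑ q ∈ A with g q = p, x ^ #q.1 * x ^ #q.2 := by
        refine sum_congr rfl fun p _ => ?_
        rw [T_eq_sum, T_eq_sum, sum_mul_sum, ← sum_product']
        refine sum_congr ?_ fun _ _ => rfl
        ext q
        simp only [A, g, mem_filter, mem_product, mem_univ, true_and, Prod.ext_iff]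
        tauto
    _ = ∑ q ∈ A with g q ∈ J, x ^ #q.1 * x ^ #q.2 := sum_fiberwise_eq_sum_filter _ _ _ _
    _ = _ := by
        refine sum_congr (filter_congr fun q hq => ?_) fun _ _ => (pow_add ..).symm
        simp only [A, mem_product, mem_filter, mem_univ, true_and] at hq
        simp only [J, g, mem_filter, mem_univ, true_and,
          restrictPart_isPartitionOn (indPart_isPartitionOn hq.1.1) hX₁,
          restrictPart_isPartitionOn (indPart_isPartitionOn hq.2.1) hX₂]

open scoped Classical in
theorem IsSplitting.sum_pow_card_eq {G G₁ G₂ : SimpleGraph V} {V₁ V₂ X : Finset V}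
    (hs : IsSplitting G G₁ G₂ V₁ V₂ X) (hV : V₁ ∪ V₂ = univ) {β γ : Finset (Finset V)}
    (hγ : IsPartitionOn X γ) (x : ℤ) :
    ∑ P : Finset (Finset V) with
        IsConnectedPartition G univ X β P ∧ restrictPart (indPart G P) X = γ, x ^ (#β + #P) =
      ∑ q ∈ univ.filter (IsConnectedPartition G₁ V₁ X β) ×ˢ
          univ.filter (IsConnectedPartition G₂ V₂ X β) with
          IsJoin X (restrictPart (indPart G₁ q.1) X) (restrictPart (indPart G₂ q.2) X) γ,
        x ^ (#q.1 + #q.2) := by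
  have huniv : ∀ {P}, IsConnectedPartition G univ X β P →
      IsConnectedPartition G (V₁ ∪ V₂) X β P := fun h => hV ▸ h
  refine sum_nbij' (fun P => (restrictPart P V₁, restrictPart P V₂))
    (fun q => gluePart q.1 q.2 X) ?_ ?_ ?_ ?_ ?_ <;>
    simp only [mem_filter, mem_product, mem_univ, true_and, and_imp, Prod.forall]
  · rintro P hP rfl
    exact ⟨⟨hs.isConnectedPartition_restrictPart hP (subset_univ _),
      hs.symm.isConnectedPartition_restrictPart hP (subset_univ _)⟩, hs.isJoin P⟩
  · intro π₁ π₂ h₁ h₂ hJ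
    have hglue := hs.isConnectedPartition_gluePart h₁ h₂
    refine ⟨hV ▸ hglue, (hs.isJoin_gluePart h₁ h₂).unique hJ ?_ hγ⟩
    exact restrictPart_isPartitionOn (indPart_isPartitionOn hglue.1)
      (hs.subset_left.trans subset_union_left)
  · intro P hP _
    exact gluePart_restrictPart hs.inter_eq (huniv hP).1 (hs.noStraddle hP.2.1)
  · intro π₁ π₂ h₁ h₂ _
    exact Prod.ext (hs.restrictPart_gluePart h₁ h₂).1 (hs.restrictPart_gluePart h₁ h₂).2
  · intro P hP _
    rw [card_restrictPart_add_card_restrictPart hs.inter_eq (huniv hP).1 (hs.noStraddle hP.2.1),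
      hP.2.2]

open scoped Classical in
theorem splitting_T_general (G G1 G2 : SimpleGraph V) (V1 V2 X : Finset V)
    (hV : V1 ∪ V2 = Finset.univ) (hX : V1 ∩ V2 = X)
    (hG1V : ∀ u v : V, G1.Adj u v → u ∈ V1 ∧ v ∈ V1)
    (hG2V : ∀ u v : V, G2.Adj u v → u ∈ V2 ∧ v ∈ V2)
    (hE : ∀ u v : V, G.Adj u v ↔ (G1.Adj u v ∨ G2.Adj u v))
    (β γ : Finset (Finset V))
    (hγ : IsPartitionOn X γ) (x : ℤ) :
    x ^ β.card * T G Finset.univ X β γ x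
      = ∑ p ∈ Finset.univ.filter
            (fun p : Finset (Finset V) × Finset (Finset V) =>
              IsPartitionOn X p.1 ∧ IsPartitionOn X p.2 ∧ IsJoin X p.1 p.2 γ),
          T G1 V1 X β p.1 x * T G2 V2 X β p.2 x := by
  have hs : IsSplitting G G1 G2 V1 V2 X := ⟨hX, hG1V, hG2V, hE⟩
  rw [sum_T_mul_T hs.subset_left hs.symm.subset_left, T_eq_sum, mul_sum]
  simp_rw [← pow_add]
  exact hs.sum_pow_card_eq hV hγ x

open scoped Classical in
/-- Splitting formula for the `T`-polynomials: for a splitting `(G¹,G²,X)` of `G`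
and partitions `β`, `γ` of `X`,
`x^{|β|}·T(G,β,γ;x) = Σ_{γ¹∨γ²=γ} T(G¹,β,γ¹;x)·T(G²,β,γ²;x)`. -/
theorem splitting_T (G G1 G2 : SimpleGraph V) (V1 V2 X : Finset V)
    (hV : V1 ∪ V2 = Finset.univ) (hX : V1 ∩ V2 = X)
    (hG1V : ∀ u v : V, G1.Adj u v → u ∈ V1 ∧ v ∈ V1)
    (hG2V : ∀ u v : V, G2.Adj u v → u ∈ V2 ∧ v ∈ V2)
    (hE : ∀ u v : V, G.Adj u v ↔ (G1.Adj u v ∨ G2.Adj u v))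
    (hEdisj : ∀ u v : V, ¬(G1.Adj u v ∧ G2.Adj u v))
    (β γ : Finset (Finset V))
    (hβ : IsPartitionOn X β) (hγ : IsPartitionOn X γ) (x : ℤ) :
    x ^ β.card * T G Finset.univ X β γ x
      = ∑ p ∈ Finset.univ.filter
            (fun p : Finset (Finset V) × Finset (Finset V) =>
              IsPartitionOn X p.1 ∧ IsPartitionOn X p.2 ∧ IsJoin X p.1 p.2 γ),
          T G1 V1 X β p.1 x * T G2 V2 X β p.2 x :=
  splitting_T_general G G1 G2 V1 V2 X hV hX hG1V hG2V hE β γ hγ x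
end

section
/- Let G = (V,E) be a finite simple graph and let G^1 = (V^1, E^1), G^2 = (V^2, E^2) be subgraphs of G with E = E^1 ∪ E^2, E^1 ∩ E^2 = ∅ and V = V^1 ∪ V^2. If V^1 ∩ V^2 = ∅, then Q(G,x) = Q(G^1,x)·Q(G^2,x); if V^1 ∩ V^2 = {v} is a single vertex (an articulation vertex), then x·Q(G,x) = Q(G^1,x)·Q(G^2,x). -/
open Finset

variable {V : Type*} [Fintype V] [DecidableEq V]

/-- `P` is a set partition of the vertex set `V`, given as a finset of (nonempty,
pairwise disjoint, covering) blocks. -/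
def IsPartition (P : Finset (Finset V)) : Prop :=
  ∅ ∉ P ∧ ∀ v : V, ∃! B : Finset V, B ∈ P ∧ v ∈ B

/-- `P` is a connected set partition of `G`: every block induces a connected subgraph. -/
def IsConnPartition (G : SimpleGraph V) (P : Finset (Finset V)) : Prop :=
  IsPartition P ∧ ∀ B ∈ P, (G.induce (B : Set V)).Connected

open scoped Classical in
/-- The finset of all connected set partitions (`Π_c(G)`). -/
noncomputable def connParts (G : SimpleGraph V) : Finset (Finset (Finset V)) :=
  Finset.univ.filter (IsConnPartition G)

open scoped Classical in
/-- The partition polynomial `Q(G,x) = Σ_{π ∈ Π_c(G)} x^{|π|}`, evaluated at `x : ℤ`. -/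
noncomputable def Q (G : SimpleGraph V) (x : ℤ) : ℤ :=
  ∑ P ∈ connParts G, x ^ P.card

/-!
Every block of a connected partition of `G` containing no vertex of `V¹ ∩ V²` lies inside `V¹` or
inside `V²`. When `V¹ ∩ V² = ∅` a connected partition of `G` is therefore the same as a pair of
connected partitions of `G[V¹]` and `G[V²]`, and `Q` is multiplicative.

At an articulation vertex `v`, sort the connected partitions of `H[s]` by the block `B ∋ v`:
`Q(H[s]) = Σ_B x · Q(H[s \ B])`. A connected `B ∋ v` of `G` splits uniquely as `B¹ ∪ B²` with
`v ∈ Bⁱ` connected in `G[Vⁱ]` (a walk in `B` stays connected after collapsing its excursions out of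
`Vⁱ` onto `v`), and `V \ B` is the disjoint union of `V¹ \ B¹` and `V² \ B²` with no edges between
them, so the disjoint case gives `x · Q(G) = Q(G[V¹]) · Q(G[V²])`.
Finally `Gⁱ[Vⁱ] = G[Vⁱ]`, since an edge of `G²` inside `V¹` would join two vertices of `V¹ ∩ V²`.
-/

namespace SimpleGraph

variable {α : Type*} {H : SimpleGraph α}

lemma subset_of_induce_connected {B W : Set α} (hB : (H.induce B).Connected) {b₀ : α}
    (hb₀ : b₀ ∈ B) (hb₀W : b₀ ∈ W) (hW : ∀ a ∈ B, ∀ b ∈ B, H.Adj a b → a ∈ W → b ∈ W) :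
    B ⊆ W := by
  suffices h : ∀ u : B, (H.induce B).Reachable ⟨b₀, hb₀⟩ u → (u : α) ∈ W from
    fun u hu => h ⟨u, hu⟩ (hB.preconnected _ _)
  intro u hu
  rw [reachable_iff_reflTransGen] at hu
  induction hu with
  | refl => exact hb₀W
  | tail _ hab ih => exact hW _ (Subtype.prop _) _ (Subtype.prop _) hab ih

lemma subset_or_subset_of_induce_connected {B s t : Set α} (hB : (H.induce B).Connected)
    (hBst : B ⊆ s ∪ t) (hst : ∀ a ∈ s, ∀ b ∈ t, ¬H.Adj a b) : B ⊆ s ∨ B ⊆ t := by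
  obtain ⟨⟨b₀, hb₀⟩⟩ := hB.nonempty
  rcases hBst hb₀ with hs | ht
  · refine .inl (subset_of_induce_connected hB hb₀ hs fun a _ b hb hab ha => ?_)
    exact (hBst hb).resolve_right fun hbt => hst a ha b hbt hab
  · refine .inr (subset_of_induce_connected hB hb₀ ht fun a _ b hb hab ha => ?_)
    exact (hBst hb).resolve_left fun hbs => hst b hbs a ha hab.symm

lemma induce_inter_connected {B W : Set α} {v : α} (hB : (H.induce B).Connected)
    (hvB : v ∈ B) (hvW : v ∈ W) (hW : ∀ a b, H.Adj a b → a ∈ W → b ∉ W → a = v) :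
    (H.induce (B ∩ W)).Connected := by
  classical
  rw [connected_iff]
  refine ⟨fun u w => ?_, ⟨⟨v, hvB, hvW⟩⟩⟩
  -- collapse everything outside `W` onto `v`
  let f : B → ↥(B ∩ W) := fun u => if hu : (u : α) ∈ W then ⟨u, u.2, hu⟩ else ⟨v, hvB, hvW⟩
  have hf : ∀ u : ↥(B ∩ W), f ⟨u, u.2.1⟩ = u := fun u => by simp [f, u.2.2]
  have hstep : ∀ a b : B, (H.induce B).Adj a b →
      Relation.ReflTransGen (H.induce (B ∩ W)).Adj (f a) (f b) := by
    intro a b hab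
    by_cases ha : (a : α) ∈ W <;> by_cases hb : (b : α) ∈ W
    · exact .single (by simpa [f, ha, hb] using hab)
    · simp only [f, dif_pos ha, dif_neg hb, hW a b hab ha hb]; rfl
    · simp only [f, dif_neg ha, dif_pos hb, hW b a hab.symm hb ha]; rfl
    · simp only [f, dif_neg ha, dif_neg hb]; rfl
  have := hB.preconnected ⟨u, u.2.1⟩ ⟨w, w.2.1⟩
  rw [reachable_iff_reflTransGen] at this ⊢
  simpa only [Function.onFun, hf] using this.lift' f hstep

lemma induce_induce_connected_iff {s : Set α} (B : Set s) :
    ((H.induce s).induce B).Connected ↔ (H.induce (Subtype.val '' B)).Connected :=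
  Iso.connected_iff
    { Equiv.Set.image Subtype.val B Subtype.val_injective with map_rel_iff' := Iff.rfl }

lemma induce_eq_of_adj_iff_or [DecidableEq α] {G G₁ G₂ : SimpleGraph α} {V1 V2 : Finset α}
    (hE : ∀ u v, G.Adj u v ↔ G₁.Adj u v ∨ G₂.Adj u v)
    (hG₂ : ∀ u v, G₂.Adj u v → u ∈ V2 ∧ v ∈ V2) (h12 : #(V1 ∩ V2) ≤ 1) :
    G₁.induce (V1 : Set α) = G.induce (V1 : Set α) := by
  ext ⟨a, ha⟩ ⟨b, hb⟩
  simp only [comap_adj, Function.Embedding.coe_subtype]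
  refine ⟨fun h => (hE a b).2 (.inl h), fun h => ((hE a b).1 h).resolve_right fun h₂ => ?_⟩
  have hab := card_le_one.1 h12 a (mem_inter.2 ⟨ha, (hG₂ a b h₂).1⟩) b
    (mem_inter.2 ⟨hb, (hG₂ a b h₂).2⟩)
  exact h₂.ne hab

end SimpleGraph

lemma Finset.univ_map_subtype_mem_coe {α : Type*} (s : Finset α) :
    (univ : Finset (s : Set α)).map (.subtype _) = s := by
  ext
  simp

section Partitions

variable {α : Type*} [DecidableEq α]

/-- No field excludes `∅ ∈ P`: connected graphs are nonempty. -/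
structure IsConnPartitionOn (H : SimpleGraph α) (s : Finset α) (P : Finset (Finset α)) :
    Prop where
  pairwiseDisjoint : (P : Set (Finset α)).PairwiseDisjoint id
  sup_eq : P.sup id = s
  connected : ∀ B ∈ P, (H.induce (B : Set α)).Connected

namespace IsConnPartitionOn

variable {H : SimpleGraph α} {s t : Finset α} {P Q : Finset (Finset α)} {B C : Finset α} {u : α}

lemma nonempty (hP : IsConnPartitionOn H s P) (hB : B ∈ P) : B.Nonempty := by
  obtain ⟨⟨u, hu⟩⟩ := (hP.connected B hB).nonempty
  exact ⟨u, hu⟩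

lemma subset (hP : IsConnPartitionOn H s P) (hB : B ∈ P) : B ⊆ s :=
  hP.sup_eq ▸ le_sup (f := id) hB

lemma exists_mem (hP : IsConnPartitionOn H s P) (hu : u ∈ s) : ∃ B ∈ P, u ∈ B := by
  simpa [← hP.sup_eq, mem_sup] using hu

lemma eq_of_mem (hP : IsConnPartitionOn H s P) (hB : B ∈ P) (hC : C ∈ P) (huB : u ∈ B)
    (huC : u ∈ C) : B = C :=
  hP.pairwiseDisjoint.elim_finset hB hC u huB huC

lemma not_subset (hP : IsConnPartitionOn H s P) (hB : B ∈ P) (hst : Disjoint s t) : ¬B ⊆ t :=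
  fun hBt => (hP.nonempty hB).ne_empty (disjoint_self.1 (hst.mono (hP.subset hB) hBt))

lemma disjoint (hP : IsConnPartitionOn H s P) (hQ : IsConnPartitionOn H t Q) (hst : Disjoint s t) :
    Disjoint P Q :=
  disjoint_left.2 fun _ hBP hBQ => hP.not_subset hBP hst (hQ.subset hBQ)

lemma notMem_of_sdiff (hP : IsConnPartitionOn H (s \ B) P) (hB : B.Nonempty) : B ∉ P := by
  intro hBP
  obtain ⟨u, hu⟩ := hB
  exact (mem_sdiff.1 (hP.subset hBP hu)).2 hu

lemma insert (hP : IsConnPartitionOn H (s \ B) P) (hBs : B ⊆ s)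
    (hB : (H.induce (B : Set α)).Connected) : IsConnPartitionOn H s (insert B P) where
  pairwiseDisjoint := by
    rw [coe_insert]
    exact hP.pairwiseDisjoint.insert fun C hC _ => disjoint_sdiff.mono_right (hP.subset hC)
  sup_eq := by rw [sup_insert, hP.sup_eq, id, sup_eq_union, union_sdiff_of_subset hBs]
  connected := forall_mem_insert _ _ _ |>.2 ⟨hB, hP.connected⟩

lemma erase (hP : IsConnPartitionOn H s P) (hB : B ∈ P) :
    IsConnPartitionOn H (s \ B) (P.erase B) where
  pairwiseDisjoint := hP.pairwiseDisjoint.subset (coe_subset.2 (erase_subset B P))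
  sup_eq := by
    ext u
    simp only [mem_sup, mem_erase, id, mem_sdiff]
    constructor
    · rintro ⟨C, ⟨hCB, hC⟩, huC⟩
      exact ⟨hP.subset hC huC, fun huB => hCB (hP.eq_of_mem hC hB huC huB)⟩
    · rintro ⟨hus, huB⟩
      obtain ⟨C, hC, huC⟩ := hP.exists_mem hus
      exact ⟨C, ⟨fun h => huB (h ▸ huC), hC⟩, huC⟩
  connected C hC := hP.connected C (mem_of_mem_erase hC)

lemma filter_subset (hP : IsConnPartitionOn H s P) (h : ∀ B ∈ P, B ⊆ t ∨ Disjoint B t) :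
    IsConnPartitionOn H (s ∩ t) (P.filter (· ⊆ t)) where
  pairwiseDisjoint := hP.pairwiseDisjoint.subset (coe_subset.2 (Finset.filter_subset _ P))
  sup_eq := by
    ext u
    simp only [mem_sup, mem_filter, id, mem_inter]
    constructor
    · rintro ⟨C, ⟨hC, hCt⟩, huC⟩
      exact ⟨hP.subset hC huC, hCt huC⟩
    · rintro ⟨hus, hut⟩
      obtain ⟨C, hC, huC⟩ := hP.exists_mem hus
      refine ⟨C, ⟨hC, (h C hC).resolve_right fun hCt => ?_⟩, huC⟩
      exact disjoint_left.1 hCt huC hut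
  connected C hC := hP.connected C (mem_filter.1 hC).1

lemma union (hP : IsConnPartitionOn H s P) (hQ : IsConnPartitionOn H t Q) (hst : Disjoint s t) :
    IsConnPartitionOn H (s ∪ t) (P ∪ Q) where
  pairwiseDisjoint := by
    rw [coe_union]
    exact hP.pairwiseDisjoint.union hQ.pairwiseDisjoint fun B hB C hC _ =>
      hst.mono (hP.subset hB) (hQ.subset hC)
  sup_eq := by rw [sup_union, hP.sup_eq, hQ.sup_eq, sup_eq_union]
  connected B hB := (mem_union.1 hB).elim (hP.connected B) (hQ.connected B)

end IsConnPartitionOn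

lemma isConnPartitionOn_induce_iff {H : SimpleGraph α} {s : Finset α}
    {P : Finset (Finset (s : Set α))} :
    IsConnPartitionOn (H.induce s) univ P ↔
      IsConnPartitionOn H s (P.map (mapEmbedding (.subtype _)).toEmbedding) := by
  have hdisj : (P.map (mapEmbedding (.subtype _)).toEmbedding : Set (Finset α)).PairwiseDisjoint id
      ↔ (P : Set (Finset (s : Set α))).PairwiseDisjoint id := by
    simp [Set.PairwiseDisjoint, Set.Pairwise, Function.onFun]
  have hsup : (P.map (mapEmbedding (.subtype _)).toEmbedding).sup id = s ↔ P.sup id = univ := by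
    rw [← (map_injective (.subtype _)).eq_iff, univ_map_subtype_mem_coe s, sup_map,
      apply_sup_eq_sup_comp (map (.subtype _)) (fun _ _ => map_union _ _) (map_empty _)]
    rfl
  have hconn : (∀ B ∈ P.map (mapEmbedding (.subtype _)).toEmbedding,
      (H.induce (B : Set α)).Connected) ↔ ∀ B ∈ P, ((H.induce s).induce (B : Set s)).Connected := by
    refine forall_mem_map.trans (forall₂_congr fun B _ => ?_)
    rw [SimpleGraph.induce_induce_connected_iff, RelEmbedding.coe_toEmbedding, mapEmbedding_apply,
      coe_map, Function.Embedding.coe_subtype]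
  exact ⟨fun ⟨h₁, h₂, h₃⟩ => ⟨hdisj.2 h₁, hsup.2 h₂, hconn.2 h₃⟩,
    fun ⟨h₁, h₂, h₃⟩ => ⟨hdisj.1 h₁, hsup.1 h₂, hconn.1 h₃⟩⟩

end Partitions

open scoped Classical in
noncomputable def rootedBlocks {α : Type*} (H : SimpleGraph α) (s : Finset α) (v : α) :
    Finset (Finset α) :=
  s.powerset.filter fun B => v ∈ B ∧ (H.induce (B : Set α)).Connected

lemma mem_rootedBlocks {α : Type*} {H : SimpleGraph α} {s B : Finset α} {v : α} :
    B ∈ rootedBlocks H s v ↔ B ⊆ s ∧ v ∈ B ∧ (H.induce (B : Set α)).Connected := by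
  simp [rootedBlocks]

lemma isConnPartition_iff {G : SimpleGraph V} {P : Finset (Finset V)} :
    IsConnPartition G P ↔ IsConnPartitionOn G univ P := by
  constructor
  · rintro ⟨⟨-, hunique⟩, hconn⟩
    refine ⟨fun B hB C hC hBC => disjoint_left.2 fun u huB huC => hBC ?_, ?_, hconn⟩
    · exact (hunique u).unique ⟨hB, huB⟩ ⟨hC, huC⟩
    · exact eq_univ_of_forall fun u => mem_sup.2 (hunique u).exists
  · intro hP
    refine ⟨⟨fun h => ?_, fun u => ?_⟩, hP.connected⟩
    · simpa using hP.nonempty h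
    · obtain ⟨B, hB, huB⟩ := hP.exists_mem (mem_univ u)
      exact ⟨B, ⟨hB, huB⟩, fun C ⟨hC, huC⟩ => hP.eq_of_mem hC hB huC huB⟩

open scoped Classical in
noncomputable def connPartsOn (H : SimpleGraph V) (s : Finset V) : Finset (Finset (Finset V)) :=
  univ.filter (IsConnPartitionOn H s)

noncomputable def QOn (H : SimpleGraph V) (s : Finset V) (x : ℤ) : ℤ :=
  ∑ P ∈ connPartsOn H s, x ^ #P

lemma mem_connPartsOn {H : SimpleGraph V} {s : Finset V} {P : Finset (Finset V)} :
    P ∈ connPartsOn H s ↔ IsConnPartitionOn H s P := by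
  simp [connPartsOn]

lemma Q_eq_QOn_univ (G : SimpleGraph V) (x : ℤ) : Q G x = QOn G univ x := by
  have : connParts G = connPartsOn G univ := by
    ext P
    classical
    simp [connParts, mem_connPartsOn, isConnPartition_iff]
  rw [Q, QOn, this]

lemma Q_induce (H : SimpleGraph V) (s : Finset V) (x : ℤ) :
    Q (H.induce (s : Set V)) x = QOn H s x := by
  have hparts : connPartsOn H s = (connPartsOn (H.induce s) univ).map
      (mapEmbedding (mapEmbedding (.subtype _)).toEmbedding).toEmbedding := by
    ext P
    simp only [mem_map, mem_connPartsOn, RelEmbedding.coe_toEmbedding, mapEmbedding_apply]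
    constructor
    · intro hP
      have hsub : P ⊆ (univ : Finset (Finset (s : Set V))).map
          (mapEmbedding (.subtype _)).toEmbedding := fun B hB => by
        obtain ⟨B', -, rfl⟩ := subset_map_iff.1 (univ_map_subtype_mem_coe s ▸ hP.subset hB)
        exact mem_map_of_mem _ (mem_univ B')
      obtain ⟨P', -, rfl⟩ := subset_map_iff.1 hsub
      exact ⟨P', isConnPartitionOn_induce_iff.2 hP, rfl⟩
    · rintro ⟨P, hP, rfl⟩
      exact isConnPartitionOn_induce_iff.1 hP
  rw [Q_eq_QOn_univ, QOn, QOn, hparts, sum_map]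
  simp

lemma QOn_union {H : SimpleGraph V} {s t : Finset V} (hst : Disjoint s t)
    (hadj : ∀ a ∈ s, ∀ b ∈ t, ¬H.Adj a b) (x : ℤ) :
    QOn H (s ∪ t) x = QOn H s x * QOn H t x := by
  have hside {P} (hP : IsConnPartitionOn H (s ∪ t) P) (B) (hB : B ∈ P) : B ⊆ s ∨ B ⊆ t := by
    have hBst : (B : Set V) ⊆ s ∪ t := by rw [← coe_union]; exact coe_subset.2 (hP.subset hB)
    exact_mod_cast SimpleGraph.subset_or_subset_of_induce_connected (hP.connected B hB) hBst
      hadj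
  rw [QOn, QOn, QOn, sum_mul_sum, ← sum_product']
  symm
  refine sum_nbij' (fun p => p.1 ∪ p.2) (fun P => (P.filter (· ⊆ s), P.filter (· ⊆ t)))
    ?_ ?_ ?_ ?_ ?_
  · rintro ⟨P, Q⟩ h
    simp only [mem_product, mem_connPartsOn] at h ⊢
    exact h.1.union h.2 hst
  · intro P hP
    rw [mem_connPartsOn] at hP
    have hPs := hP.filter_subset (t := s) fun B hB =>
      (hside hP B hB).imp_right fun hBt => hst.symm.mono_left hBt
    have hPt := hP.filter_subset (t := t) fun B hB =>
      (hside hP B hB).symm.imp_right fun hBs => hst.mono_left hBs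
    rw [union_inter_cancel_left] at hPs
    rw [union_inter_cancel_right] at hPt
    simp only [mem_product, mem_connPartsOn]
    exact ⟨hPs, hPt⟩
  · rintro ⟨P, Q⟩ h
    simp only [mem_product, mem_connPartsOn] at h
    simp only [filter_union, Prod.mk.injEq]
    rw [filter_true_of_mem fun B => h.1.subset, filter_true_of_mem fun B => h.2.subset,
      filter_false_of_mem fun B hB => h.2.not_subset hB hst.symm,
      filter_false_of_mem fun B hB => h.1.not_subset hB hst]
    simp
  · intro P hP
    rw [mem_connPartsOn] at hP
    rw [← filter_or, filter_true_of_mem (hside hP)]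
  · rintro ⟨P, Q⟩ h
    simp only [mem_product, mem_connPartsOn] at h
    rw [card_union_of_disjoint (h.1.disjoint h.2 hst), pow_add]

lemma QOn_eq_sum_rootedBlocks (H : SimpleGraph V) {s : Finset V} {v : V} (hv : v ∈ s) (x : ℤ) :
    QOn H s x = ∑ B ∈ rootedBlocks H s v, x * QOn H (s \ B) x := by
  simp only [QOn, mul_sum, ← pow_succ']
  rw [sum_sigma']
  symm
  refine sum_bij (fun p _ => insert p.1 p.2) ?_ ?_ ?_ ?_
  · rintro ⟨B, P⟩ h
    simp only [mem_sigma, mem_rootedBlocks, mem_connPartsOn] at h ⊢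
    exact h.2.insert h.1.1 h.1.2.2
  · rintro ⟨B₁, P₁⟩ h₁ ⟨B₂, P₂⟩ h₂ h
    simp only [mem_sigma, mem_rootedBlocks, mem_connPartsOn] at h₁ h₂ h
    have hP := h₂.2.insert h₂.1.1 h₂.1.2.2
    obtain rfl : B₁ = B₂ := hP.eq_of_mem (h ▸ mem_insert_self B₁ P₁) (mem_insert_self B₂ P₂)
      h₁.1.2.1 h₂.1.2.1
    obtain rfl : P₁ = P₂ := calc
      P₁ = (insert B₁ P₁).erase B₁ := (erase_insert (h₁.2.notMem_of_sdiff ⟨v, h₁.1.2.1⟩)).symm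
      _ = (insert B₁ P₂).erase B₁ := by rw [h]
      _ = P₂ := erase_insert (h₂.2.notMem_of_sdiff ⟨v, h₂.1.2.1⟩)
    rfl
  · intro P hP
    rw [mem_connPartsOn] at hP
    obtain ⟨B, hB, hvB⟩ := hP.exists_mem hv
    refine ⟨⟨B, P.erase B⟩, ?_, insert_erase hB⟩
    simp only [mem_sigma, mem_rootedBlocks, mem_connPartsOn]
    exact ⟨⟨hP.subset hB, hvB, hP.connected B hB⟩, hP.erase hB⟩
  · rintro ⟨B, P⟩ h
    simp only [mem_sigma, mem_rootedBlocks, mem_connPartsOn] at h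
    rw [card_insert_of_notMem (h.2.notMem_of_sdiff ⟨v, h.1.2.1⟩)]

section Articulation

variable {α : Type*} [DecidableEq α] {G : SimpleGraph α} {s t V1 V2 B₁ B₂ W : Finset α} {v : α}

lemma inter_mem_rootedBlocks (hB : B₁ ∈ rootedBlocks G s v) (hvW : v ∈ W)
    (hW : ∀ a b, G.Adj a b → a ∈ W → b ∉ W → a = v) : B₁ ∩ W ∈ rootedBlocks G W v := by
  rw [mem_rootedBlocks] at hB ⊢
  refine ⟨inter_subset_right, mem_inter.2 ⟨hB.2.1, hvW⟩, ?_⟩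
  rw [coe_inter]
  exact SimpleGraph.induce_inter_connected hB.2.2 hB.2.1 hvW hW

lemma union_mem_rootedBlocks (h₁ : B₁ ∈ rootedBlocks G s v) (h₂ : B₂ ∈ rootedBlocks G t v) :
    B₁ ∪ B₂ ∈ rootedBlocks G (s ∪ t) v := by
  rw [mem_rootedBlocks] at h₁ h₂ ⊢
  refine ⟨union_subset_union h₁.1 h₂.1, mem_union_left _ h₁.2.1, ?_⟩
  rw [coe_union]
  exact SimpleGraph.induce_union_connected h₁.2.2.preconnected h₂.2.2.preconnected
    ⟨v, h₁.2.1, h₂.2.1⟩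

lemma eq_of_mem_of_inter_eq_singleton (hv : V1 ∩ V2 = {v}) {u : α} (h₁ : u ∈ V1) (h₂ : u ∈ V2) :
    u = v := by
  simpa [hv] using mem_inter.2 ⟨h₁, h₂⟩

lemma eq_of_adj_of_notMem (hv : V1 ∩ V2 = {v})
    (hsplit : ∀ a b, G.Adj a b → (a ∈ V1 ∧ b ∈ V1) ∨ (a ∈ V2 ∧ b ∈ V2)) {a b : α}
    (hab : G.Adj a b) (ha : a ∈ V1) (hb : b ∉ V1) : a = v :=
  eq_of_mem_of_inter_eq_singleton hv ha ((hsplit a b hab).resolve_left fun h => hb h.2).1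

lemma sum_rootedBlocks_union {M : Type*} [AddCommMonoid M] (hv : V1 ∩ V2 = {v})
    (hsplit : ∀ a b, G.Adj a b → (a ∈ V1 ∧ b ∈ V1) ∨ (a ∈ V2 ∧ b ∈ V2)) (f : Finset α → M) :
    ∑ B ∈ rootedBlocks G (V1 ∪ V2) v, f B =
      ∑ p ∈ rootedBlocks G V1 v ×ˢ rootedBlocks G V2 v, f (p.1 ∪ p.2) := by
  have hv' : V2 ∩ V1 = {v} := inter_comm V1 V2 ▸ hv
  have hsplit' : ∀ a b, G.Adj a b → (a ∈ V2 ∧ b ∈ V2) ∨ (a ∈ V1 ∧ b ∈ V1) :=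
    fun a b hab => (hsplit a b hab).symm
  have hv₁ : v ∈ V1 := (mem_inter.1 (hv ▸ mem_singleton_self v)).1
  have hv₂ : v ∈ V2 := (mem_inter.1 (hv ▸ mem_singleton_self v)).2
  symm
  refine sum_nbij' (fun p => p.1 ∪ p.2) (fun B => (B ∩ V1, B ∩ V2)) ?_ ?_ ?_ ?_ fun _ _ => rfl
  · rintro ⟨B₁, B₂⟩ h
    rw [mem_product] at h
    exact union_mem_rootedBlocks h.1 h.2
  · intro B hB
    exact mem_product.2 ⟨inter_mem_rootedBlocks hB hv₁ fun a b => eq_of_adj_of_notMem hv hsplit,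
      inter_mem_rootedBlocks hB hv₂ fun a b => eq_of_adj_of_notMem hv' hsplit'⟩
  · rintro ⟨B₁, B₂⟩ h
    simp only [mem_product, mem_rootedBlocks] at h
    have h₂₁ : B₂ ∩ V1 ⊆ B₁ := (inter_subset_inter_right h.2.1).trans
      (hv'.subset.trans (singleton_subset_iff.2 h.1.2.1))
    have h₁₂ : B₁ ∩ V2 ⊆ B₂ := (inter_subset_inter_right h.1.1).trans
      (hv.subset.trans (singleton_subset_iff.2 h.2.2.1))
    rw [union_inter_distrib_right, union_inter_distrib_right, inter_eq_left.2 h.1.1,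
      inter_eq_left.2 h.2.1, union_eq_left.2 h₂₁, union_eq_right.2 h₁₂]
  · intro B hB
    rw [← inter_union_distrib_left, inter_eq_left.2 (mem_rootedBlocks.1 hB).1]

end Articulation

section ArticulationQ

variable {G : SimpleGraph V} {V1 V2 B₁ B₂ : Finset V} {v : V}

lemma QOn_sdiff_union (hv : V1 ∩ V2 = {v})
    (hsplit : ∀ a b, G.Adj a b → (a ∈ V1 ∧ b ∈ V1) ∨ (a ∈ V2 ∧ b ∈ V2))
    (h₁ : B₁ ∈ rootedBlocks G V1 v) (h₂ : B₂ ∈ rootedBlocks G V2 v) (x : ℤ) :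
    QOn G ((V1 ∪ V2) \ (B₁ ∪ B₂)) x = QOn G (V1 \ B₁) x * QOn G (V2 \ B₂) x := by
  rw [mem_rootedBlocks] at h₁ h₂
  have hsep {u} (hu₁ : u ∈ V1) (hu₂ : u ∈ V2) : u ∈ B₁ ∧ u ∈ B₂ := by
    obtain rfl := eq_of_mem_of_inter_eq_singleton hv hu₁ hu₂
    exact ⟨h₁.2.1, h₂.2.1⟩
  have hsdiff : (V1 ∪ V2) \ (B₁ ∪ B₂) = (V1 \ B₁) ∪ (V2 \ B₂) := by
    ext u
    simp only [mem_sdiff, mem_union]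
    constructor
    · rintro ⟨hu₁ | hu₂, hu⟩
      · exact .inl ⟨hu₁, fun h => hu (.inl h)⟩
      · exact .inr ⟨hu₂, fun h => hu (.inr h)⟩
    · rintro (⟨hu₁, hu⟩ | ⟨hu₂, hu⟩)
      · exact ⟨.inl hu₁, fun h => hu (h.elim id fun h => (hsep hu₁ (h₂.1 h)).1)⟩
      · exact ⟨.inr hu₂, fun h => hu (h.elim (fun h => (hsep (h₁.1 h) hu₂).2) id)⟩
  rw [hsdiff]
  refine QOn_union (disjoint_left.2 fun u hu hu' => (mem_sdiff.1 hu).2 ?_) ?_ x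
  · exact (hsep (mem_sdiff.1 hu).1 (mem_sdiff.1 hu').1).1
  · intro a ha b hb hab
    rw [mem_sdiff] at ha hb
    rcases hsplit a b hab with ⟨-, hb₁⟩ | ⟨ha₂, -⟩
    · exact hb.2 (hsep hb₁ hb.1).2
    · exact ha.2 (hsep ha.1 ha₂).1

lemma mul_QOn_union (hv : V1 ∩ V2 = {v})
    (hsplit : ∀ a b, G.Adj a b → (a ∈ V1 ∧ b ∈ V1) ∨ (a ∈ V2 ∧ b ∈ V2)) (x : ℤ) :
    x * QOn G (V1 ∪ V2) x = QOn G V1 x * QOn G V2 x := by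
  have hv₁ : v ∈ V1 := (mem_inter.1 (hv ▸ mem_singleton_self v)).1
  have hv₂ : v ∈ V2 := (mem_inter.1 (hv ▸ mem_singleton_self v)).2
  calc x * QOn G (V1 ∪ V2) x
      = x * ∑ B ∈ rootedBlocks G (V1 ∪ V2) v, x * QOn G ((V1 ∪ V2) \ B) x := by
        rw [QOn_eq_sum_rootedBlocks G (mem_union_left V2 hv₁)]
    _ = ∑ p ∈ rootedBlocks G V1 v ×ˢ rootedBlocks G V2 v,
          (x * QOn G (V1 \ p.1) x) * (x * QOn G (V2 \ p.2) x) := by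
        rw [sum_rootedBlocks_union hv hsplit, mul_sum]
        refine sum_congr rfl fun p hp => ?_
        rw [mem_product] at hp
        rw [QOn_sdiff_union hv hsplit hp.1 hp.2]
        ring
    _ = QOn G V1 x * QOn G V2 x := by
        rw [sum_product, QOn_eq_sum_rootedBlocks G hv₁, QOn_eq_sum_rootedBlocks G hv₂,
          sum_mul_sum]

end ArticulationQ

theorem splitting_small_separator_general (G G1 G2 : SimpleGraph V) (V1 V2 : Finset V)
    (hV : V1 ∪ V2 = Finset.univ)
    (hG1V : ∀ u v : V, G1.Adj u v → u ∈ V1 ∧ v ∈ V1)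
    (hG2V : ∀ u v : V, G2.Adj u v → u ∈ V2 ∧ v ∈ V2)
    (hE : ∀ u v : V, G.Adj u v ↔ (G1.Adj u v ∨ G2.Adj u v)) (x : ℤ) :
    (V1 ∩ V2 = ∅ →
      Q G x = Q (G1.induce (V1 : Set V)) x * Q (G2.induce (V2 : Set V)) x) ∧
    (∀ v : V, V1 ∩ V2 = {v} →
      x * Q G x = Q (G1.induce (V1 : Set V)) x * Q (G2.induce (V2 : Set V)) x) := by
  have hsplit : ∀ a b, G.Adj a b → (a ∈ V1 ∧ b ∈ V1) ∨ (a ∈ V2 ∧ b ∈ V2) := fun a b hab =>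
    ((hE a b).1 hab).imp (hG1V a b) (hG2V a b)
  have hQ (h12 : #(V1 ∩ V2) ≤ 1) :
      Q (G1.induce V1) x * Q (G2.induce V2) x = QOn G V1 x * QOn G V2 x := by
    rw [SimpleGraph.induce_eq_of_adj_iff_or hE hG2V h12,
      SimpleGraph.induce_eq_of_adj_iff_or (fun u v => (hE u v).trans or_comm) hG1V
        (inter_comm V1 V2 ▸ h12), Q_induce, Q_induce]
  rw [Q_eq_QOn_univ, ← hV]
  refine ⟨fun h => ?_, fun v hv => ?_⟩
  · rw [hQ (by simp [h])]
    refine QOn_union (disjoint_iff_inter_eq_empty.2 h) (fun a ha b hb hab => ?_) x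
    rcases hsplit a b hab with ⟨-, hb₁⟩ | ⟨ha₂, -⟩
    · simpa [h] using mem_inter.2 ⟨hb₁, hb⟩
    · simpa [h] using mem_inter.2 ⟨ha, ha₂⟩
  · rw [hQ (by simp [hv])]
    exact mul_QOn_union hv hsplit x

/-- Splitting on an empty or one-vertex separating set: if `G` splits into edge-disjoint
subgraphs `G¹`, `G²` on vertex sets `V¹`, `V²` covering `V`, then
`V¹ ∩ V² = ∅` gives `Q(G,x) = Q(G¹,x)·Q(G²,x)` and `V¹ ∩ V² = {v}` gives
`x·Q(G,x) = Q(G¹,x)·Q(G²,x)`. -/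
theorem splitting_small_separator (G G1 G2 : SimpleGraph V) (V1 V2 : Finset V)
    (hV : V1 ∪ V2 = Finset.univ)
    (hG1V : ∀ u v : V, G1.Adj u v → u ∈ V1 ∧ v ∈ V1)
    (hG2V : ∀ u v : V, G2.Adj u v → u ∈ V2 ∧ v ∈ V2)
    (hE : ∀ u v : V, G.Adj u v ↔ (G1.Adj u v ∨ G2.Adj u v))
    (hEdisj : ∀ u v : V, ¬(G1.Adj u v ∧ G2.Adj u v)) (x : ℤ) :
    (V1 ∩ V2 = ∅ →
      Q G x = Q (G1.induce (V1 : Set V)) x * Q (G2.induce (V2 : Set V)) x) ∧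
    (∀ v : V, V1 ∩ V2 = {v} →
      x * Q G x = Q (G1.induce (V1 : Set V)) x * Q (G2.induce (V2 : Set V)) x) :=
  splitting_small_separator_general G G1 G2 V1 V2 hV hG1V hG2V hE x
end

section
/- Let C_n be the cycle graph on n ≥ 3 vertices. Then the bivariate partition (minimal cut) polynomial satisfies Q(C_n, x, y) = (x+y)^n − x·y^{n−1}·(n − y) − y^n. -/
open Finset

variable {V : Type*} [Fintype V] [DecidableEq V]

open scoped Classical in
/-- `E(G[π])`: the intra-block edges of `G` with respect to the partition `P`,
i.e. the edges of `G` both of whose endpoints lie in one block of `P`. -/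
noncomputable def intraEdges (G : SimpleGraph V) (P : Finset (Finset V)) :
    Finset (Sym2 V) :=
  Finset.univ.filter (fun e : Sym2 V => e ∈ G.edgeSet ∧ ∃ B ∈ P, ∀ u ∈ e, u ∈ B)

open scoped Classical in
/-- The bivariate partition (minimal cut) polynomial
`Q(G,x,y) = Σ_{π ∈ Π_c(G)} x^{|π|} y^{|E(G[π])|}`. -/
noncomputable def Q2 (G : SimpleGraph V) (x y : ℤ) : ℤ :=
  ∑ P ∈ connParts G, x ^ P.card * y ^ (intraEdges G P).card

/-! A connected partition of `C_n` is determined by its set `T` of starts, the vertices `v`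
whose edge `s(v - 1, v)` is cut: the block of `v` is the fibre over the last start at or before
`v`. Conversely every `T` with `|T| ≠ 1` arises this way (one cut edge does not disconnect a
cycle), giving a partition with `max |T| 1` blocks and `n - |T|` intra-block edges. Hence
`Q(C_n, x, y) = ∑_{|T| ≠ 1} x ^ max |T| 1 * y ^ (n - |T|)`, which is the binomial expansion of
`(x + y) ^ n` with the terms `|T| = 1` removed and the term `T = ∅` corrected. -/

open SimpleGraph

section Fibers

variable {α : Type*} [DecidableEq α]

def fibers (f : V → α) : Finset (Finset V) :=
  univ.image fun v => univ.filter (f · = f v)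

lemma mem_fibers {f : V → α} {B : Finset V} :
    B ∈ fibers f ↔ ∃ v, univ.filter (f · = f v) = B := by
  simp [fibers]

lemma exists_mem_fibers_iff {f : V → α} {u v : V} :
    (∃ B ∈ fibers f, u ∈ B ∧ v ∈ B) ↔ f u = f v := by
  simp only [mem_fibers]
  constructor
  · rintro ⟨B, ⟨w, rfl⟩, hu, hv⟩
    simp only [mem_filter, mem_univ, true_and] at hu hv
    rw [hu, hv]
  · intro h
    exact ⟨_, ⟨v, rfl⟩, by simpa using h, by simp⟩

lemma isPartition_fibers (f : V → α) : IsPartition (fibers f) := by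
  refine ⟨fun h => ?_,
    fun v => ⟨univ.filter (f · = f v), ⟨mem_fibers.2 ⟨v, rfl⟩, by simp⟩, ?_⟩⟩
  · obtain ⟨v, hv⟩ := mem_fibers.1 h
    have hvv : v ∈ univ.filter (f · = f v) := by simp
    simp [hv] at hvv
  · rintro B ⟨hB, hvB⟩
    obtain ⟨w, rfl⟩ := mem_fibers.1 hB
    simp only [mem_filter, mem_univ, true_and] at hvB
    simp [hvB]

lemma card_fibers (f : V → α) : (fibers f).card = (univ.image f).card := by
  have : fibers f = (univ.image f).image fun a => univ.filter (f · = a) := by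
    rw [fibers, image_image]; rfl
  rw [this, card_image_of_injOn]
  intro a ha b _ hab
  obtain ⟨v, -, rfl⟩ := mem_image.1 ha
  have : v ∈ univ.filter (f · = f v) := by simp
  simpa [hab] using this

lemma IsPartition.eq_fibers {P : Finset (Finset V)} (hP : IsPartition P) {f : V → α}
    (hf : ∀ B ∈ P, ∀ u ∈ B, ∀ v, v ∈ B ↔ f v = f u) : P = fibers f := by
  have block_eq {B : Finset V} (hB : B ∈ P) {u : V} (hu : u ∈ B) :
      B = univ.filter (f · = f u) := by
    ext v; simp [hf B hB u hu]
  ext B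
  rw [mem_fibers]
  constructor
  · intro hB
    obtain ⟨u, hu⟩ := nonempty_iff_ne_empty.2 (ne_of_mem_of_not_mem hB hP.1)
    exact ⟨u, (block_eq hB hu).symm⟩
  · rintro ⟨v, rfl⟩
    obtain ⟨C, ⟨hC, hvC⟩, -⟩ := hP.2 v
    rwa [← block_eq hC hvC]

end Fibers

namespace CycleGraph

open scoped Fin.NatCast Fin.CommRing

variable {n : ℕ} [NeZero n] {T : Finset (Fin n)} {P : Finset (Finset (Fin n))}
  {B : Finset (Fin n)} {u v : Fin n}

-- For `T = ∅` the value `v.val` makes `prevStart ∅` constantly `0`, so that its fibres form the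
-- one-block partition.
open scoped Classical in
noncomputable def distToStart (T : Finset (Fin n)) (v : Fin n) : ℕ :=
  if h : ∃ d : ℕ, v - d ∈ T then Nat.find h else v.val

noncomputable def prevStart (T : Finset (Fin n)) (v : Fin n) : Fin n :=
  v - distToStart T v

lemma exists_sub_natCast_mem {t : Fin n} (ht : t ∈ T) (v : Fin n) : ∃ d : ℕ, v - d ∈ T :=
  ⟨(v - t).val, by rwa [Fin.cast_val_eq_self, sub_sub_cancel]⟩

lemma sub_natCast_notMem_of_lt_distToStart {j : ℕ} (hj : j < distToStart T v) : v - j ∉ T := by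
  unfold distToStart at hj
  split_ifs at hj with h
  · exact Nat.find_min h hj
  · exact fun hj' => h ⟨j, hj'⟩

lemma distToStart_le {j : ℕ} (hj : v - j ∈ T) : distToStart T v ≤ j := by
  rw [distToStart, dif_pos ⟨j, hj⟩]
  exact Nat.find_min' _ hj

lemma prevStart_mem (hT : T.Nonempty) (v : Fin n) : prevStart T v ∈ T := by
  obtain ⟨t, ht⟩ := hT
  have h := exists_sub_natCast_mem ht v
  rw [prevStart, distToStart, dif_pos h]
  exact Nat.find_spec h

lemma prevStart_of_mem (hv : v ∈ T) : prevStart T v = v := by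
  have h0 : v - ((0 : ℕ) : Fin n) ∈ T := by simpa using hv
  rw [prevStart, Nat.le_zero.1 (distToStart_le h0), Nat.cast_zero, sub_zero]

lemma prevStart_empty (v : Fin n) : prevStart ∅ v = 0 := by
  simp [prevStart, distToStart]

lemma prevStart_prevStart (v : Fin n) : prevStart T (prevStart T v) = prevStart T v := by
  rcases T.eq_empty_or_nonempty with rfl | hT
  · simp [prevStart_empty]
  · exact prevStart_of_mem (prevStart_mem hT v)

lemma prevStart_sub_one (hv : v ∉ T) : prevStart T (v - 1) = prevStart T v := by
  rcases T.eq_empty_or_nonempty with rfl | ⟨t, ht⟩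
  · simp [prevStart_empty]
  have h := exists_sub_natCast_mem ht v
  have h' := exists_sub_natCast_mem ht (v - 1)
  have hsucc : ∀ d : ℕ, v - ((d + 1 : ℕ) : Fin n) = v - 1 - d := fun d => by push_cast; ring
  have hdist : distToStart T v = distToStart T (v - 1) + 1 := by
    rw [distToStart, distToStart, dif_pos h, dif_pos h',
      Nat.find_comp_succ h (by simpa only [hsucc] using h') (by simpa using hv)]
    simp only [hsucc]
  rw [prevStart, prevStart, hdist]
  push_cast
  ring

lemma image_prevStart (hT : T.Nonempty) : univ.image (prevStart T) = T := by
  ext v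
  simp only [mem_image, mem_univ, true_and]
  exact ⟨fun ⟨w, hw⟩ => hw ▸ prevStart_mem hT w, fun hv => ⟨v, prevStart_of_mem hv⟩⟩

lemma card_image_prevStart (T : Finset (Fin n)) :
    (univ.image (prevStart T)).card = max T.card 1 := by
  rcases T.eq_empty_or_nonempty with rfl | hT
  · simp [funext prevStart_empty, image_const univ_nonempty]
  · rw [image_prevStart hT, max_eq_left hT.card_pos]

lemma prevStart_sub_one_ne (hT : 2 ≤ T.card) (v : Fin n) : prevStart T (v - 1) ≠ v := by
  obtain ⟨t, ht, htv⟩ := exists_mem_ne hT v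
  have hvt : v - t ≠ 0 := sub_ne_zero.2 htv.symm
  have hle : distToStart T (v - 1) ≤ (v - t).val - 1 := by
    rw [← Fin.val_sub_one_of_ne_zero hvt]
    apply distToStart_le
    rwa [Fin.cast_val_eq_self, show v - 1 - (v - t - 1) = t by ring]
  intro h
  have hzero : ((distToStart T (v - 1) + 1 : ℕ) : Fin n) = 0 := by
    rw [prevStart] at h
    push_cast
    linear_combination -h
  have hlt := (v - t).isLt
  have hpos : 0 < (v - t).val := Fin.pos_iff_ne_zero.2 hvt
  have := Nat.le_of_dvd (Nat.succ_pos _) (Fin.natCast_eq_zero.1 hzero)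
  omega

lemma cycleGraph_adj_iff (hn : 2 ≤ n) : (cycleGraph n).Adj u v ↔ u = v - 1 ∨ v = u - 1 := by
  have h1 : (1 : Fin n).val = 1 := by rw [Fin.val_one', Nat.mod_eq_of_lt hn]
  rw [cycleGraph_adj', ← h1, ← Fin.ext_iff, ← Fin.ext_iff, or_comm]
  constructor <;> rintro (h | h) <;> [left; right; left; right] <;> linear_combination -h

def starts (P : Finset (Finset (Fin n))) : Finset (Fin n) :=
  univ.filter fun v => ¬ ∃ B ∈ P, v - 1 ∈ B ∧ v ∈ B

lemma mem_starts : v ∈ starts P ↔ ¬ ∃ B ∈ P, v - 1 ∈ B ∧ v ∈ B := by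
  simp [starts]

lemma exists_reachable_prevStart (hn : 2 ≤ n) {S : Finset (Fin n)}
    (hS : ∀ u ∈ S, u ∉ T → u - 1 ∈ S) {w : Fin n} (hw : w ∈ S) :
    ∃ h : prevStart T w ∈ S,
      ((cycleGraph n).induce (S : Set (Fin n))).Reachable ⟨w, hw⟩ ⟨prevStart T w, h⟩ := by
  suffices key : ∀ k ≤ distToStart T w, ∃ h : w - k ∈ S,
      ((cycleGraph n).induce (S : Set (Fin n))).Reachable ⟨w, hw⟩ ⟨w - k, h⟩ from
    key _ le_rfl
  intro k hk
  induction k with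
  | zero => exact ⟨by simpa using hw, by simp only [Nat.cast_zero, sub_zero]; rfl⟩
  | succ k ih =>
    obtain ⟨hkS, hreach⟩ := ih (by omega)
    have hsucc : w - ((k + 1 : ℕ) : Fin n) = w - k - 1 := by push_cast; ring
    have hmem := hS _ hkS (sub_natCast_notMem_of_lt_distToStart (by omega))
    rw [← hsucc] at hmem
    refine ⟨hmem, hreach.trans (Adj.reachable ?_)⟩
    simp only [comap_adj, Function.Embedding.coe_subtype, cycleGraph_adj_iff hn]
    exact Or.inr hsucc

lemma prevStart_starts_mem_of_mem (hn : 2 ≤ n) (hP : IsPartition P) (hB : B ∈ P)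
    (hv : v ∈ B) :
    prevStart (starts P) v ∈ B := by
  refine (exists_reachable_prevStart hn (fun u hu hus => ?_) hv).fst
  obtain ⟨C, hC, hu1C, huC⟩ := not_not.1 (mem_starts.not.1 hus)
  rwa [(hP.2 u).unique ⟨hC, huC⟩ ⟨hB, hu⟩] at hu1C

lemma prevStart_starts_eq_of_adj (hn : 2 ≤ n) (hB : B ∈ P) (hu : u ∈ B) (hv : v ∈ B)
    (hadj : (cycleGraph n).Adj u v) : prevStart (starts P) u = prevStart (starts P) v := by
  rcases (cycleGraph_adj_iff hn).1 hadj with rfl | rfl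
  · exact prevStart_sub_one (mem_starts.not.2 (not_not.2 ⟨B, hB, hu, hv⟩))
  · exact (prevStart_sub_one (mem_starts.not.2 (not_not.2 ⟨B, hB, hv, hu⟩))).symm

lemma prevStart_starts_eq_of_mem (hn : 2 ≤ n) (hP : IsConnPartition (cycleGraph n) P)
    (hB : B ∈ P) (hu : u ∈ B) (hv : v ∈ B) :
    prevStart (starts P) u = prevStart (starts P) v := by
  have walk_const {x y : (B : Set (Fin n))}
      (p : ((cycleGraph n).induce (B : Set (Fin n))).Walk x y) :
      prevStart (starts P) x = prevStart (starts P) y := by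
    induction p with
    | nil => rfl
    | @cons x y z hadj _ ih =>
      exact (prevStart_starts_eq_of_adj hn hB x.2 y.2 (induce_adj.1 hadj)).trans ih
  have h := walk_const ((hP.2 B hB).preconnected ⟨u, hu⟩ ⟨v, hv⟩).some
  exact h

lemma IsConnPartition.eq_fibers_prevStart (hn : 2 ≤ n) (hP : IsConnPartition (cycleGraph n) P) :
    P = fibers (prevStart (starts P)) := by
  refine hP.1.eq_fibers fun B hB u hu v => ⟨fun hv => prevStart_starts_eq_of_mem hn hP hB hv hu,
    fun huv => ?_⟩
  obtain ⟨C, ⟨hC, hvC⟩, -⟩ := hP.1.2 v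
  have hCB := (hP.1.2 _).unique ⟨hC, prevStart_starts_mem_of_mem hn hP.1 hC hvC⟩
    ⟨hB, huv ▸ prevStart_starts_mem_of_mem hn hP.1 hB hu⟩
  exact hCB ▸ hvC

lemma IsConnPartition.card_starts_ne_one (hn : 2 ≤ n)
    (hP : IsConnPartition (cycleGraph n) P) : (starts P).card ≠ 1 := by
  intro h
  obtain ⟨a, ha⟩ := card_eq_one.1 h
  obtain ⟨B, ⟨hB, haB⟩, -⟩ := hP.1.2 (a - 1)
  have hprev := prevStart_starts_mem_of_mem hn hP.1 hB haB
  rw [ha, mem_singleton.1 (prevStart_mem (singleton_nonempty a) _)] at hprev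
  exact mem_starts.1 (ha ▸ mem_singleton_self a) ⟨B, hB, haB, hprev⟩

lemma isConnPartition_fibers_prevStart (hn : 2 ≤ n) (T : Finset (Fin n)) :
    IsConnPartition (cycleGraph n) (fibers (prevStart T)) := by
  refine ⟨isPartition_fibers _, fun B hB => ?_⟩
  obtain ⟨v, rfl⟩ := mem_fibers.1 hB
  have hclosed : ∀ u ∈ univ.filter (prevStart T · = prevStart T v), u ∉ T →
      u - 1 ∈ univ.filter (prevStart T · = prevStart T v) := by
    intro u hu huT
    simpa [prevStart_sub_one huT] using hu
  have hc : prevStart T v ∈ univ.filter (prevStart T · = prevStart T v) := by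
    simp [prevStart_prevStart]
  rw [connected_iff_exists_forall_reachable]
  refine ⟨⟨_, hc⟩, fun ⟨w, hw⟩ => ?_⟩
  obtain ⟨h, hreach⟩ := exists_reachable_prevStart hn hclosed hw
  have hwc : (⟨prevStart T w, h⟩ : (_ : Set (Fin n))) = ⟨prevStart T v, hc⟩ :=
    Subtype.ext (by simpa using hw)
  exact hwc ▸ hreach.symm

lemma starts_fibers_prevStart (hT : T.card ≠ 1) : starts (fibers (prevStart T)) = T := by
  ext v
  simp only [mem_starts, exists_mem_fibers_iff]
  constructor
  · exact fun h => by_contra fun hv => h (prevStart_sub_one hv)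
  · intro hv
    have hT2 : 2 ≤ T.card := by have := card_pos.2 ⟨v, hv⟩; omega
    rw [prevStart_of_mem hv]
    exact prevStart_sub_one_ne hT2 v

lemma card_fibers_prevStart (T : Finset (Fin n)) :
    (fibers (prevStart T)).card = max T.card 1 := by
  rw [card_fibers, card_image_prevStart]

lemma injective_sym2_sub_one (hn : 3 ≤ n) : Function.Injective fun v : Fin n => s(v - 1, v) := by
  intro v w h
  rcases Sym2.eq_iff.1 h with ⟨-, h⟩ | ⟨h1, h2⟩
  · exact h
  · have h2 : ((2 : ℕ) : Fin n) = 0 := by push_cast; linear_combination h2 - h1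
    have := Nat.le_of_dvd two_pos (Fin.natCast_eq_zero.1 h2)
    omega

lemma intraEdges_eq_image (hn : 2 ≤ n) (P : Finset (Finset (Fin n))) :
    intraEdges (cycleGraph n) P = (univ \ starts P).image fun v => s(v - 1, v) := by
  ext e
  induction e using Sym2.ind with
  | _ u w =>
  simp only [intraEdges, mem_filter, mem_univ, true_and, mem_edgeSet, mem_image, mem_sdiff,
    mem_starts, not_not, Sym2.mem_iff, forall_eq_or_imp, forall_eq, cycleGraph_adj_iff hn]
  constructor
  · rintro ⟨rfl | rfl, B, hB, huB, hwB⟩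
    · exact ⟨w, ⟨B, hB, huB, hwB⟩, rfl⟩
    · exact ⟨u, ⟨B, hB, hwB, huB⟩, Sym2.eq_swap⟩
  · rintro ⟨v, ⟨B, hB, hv1B, hvB⟩, he⟩
    rcases Sym2.eq_iff.1 he with ⟨rfl, rfl⟩ | ⟨rfl, rfl⟩
    · exact ⟨Or.inl rfl, B, hB, hv1B, hvB⟩
    · exact ⟨Or.inr rfl, B, hB, hvB, hv1B⟩

lemma card_intraEdges (hn : 3 ≤ n) (P : Finset (Finset (Fin n))) :
    (intraEdges (cycleGraph n) P).card = n - (starts P).card := by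
  rw [intraEdges_eq_image (by omega), card_image_of_injective _ (injective_sym2_sub_one hn),
    card_sdiff_of_subset (subset_univ _), card_univ, Fintype.card_fin]

end CycleGraph

lemma sum_pow_max_mul_pow_of_card_ne_one {ι : Type*} [Fintype ι] [Nonempty ι] (x y : ℤ) :
    ∑ T ∈ univ.filter (fun T : Finset ι => T.card ≠ 1),
        x ^ max T.card 1 * y ^ (Fintype.card ι - T.card)
      = (x + y) ^ Fintype.card ι - x * y ^ (Fintype.card ι - 1) * (Fintype.card ι - y)
        - y ^ Fintype.card ι := by
  obtain ⟨m, hm⟩ : ∃ m, Fintype.card ι = m + 1 := Nat.exists_eq_add_one.2 Fintype.card_pos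
  rw [sum_filter, ← powerset_univ,
    sum_powerset_apply_card
      (fun k => if k ≠ 1 then x ^ max k 1 * y ^ (Fintype.card ι - k) else 0),
    add_pow, card_univ, hm, sum_range_succ', sum_range_succ', sum_range_succ', sum_range_succ']
  have hterm : ∀ k ∈ range m,
      ((m + 1).choose (k + 1 + 1) : ℤ) * (if k + 1 + 1 ≠ 1 then
        x ^ max (k + 1 + 1) 1 * y ^ (m + 1 - (k + 1 + 1)) else 0)
      = x ^ (k + 1 + 1) * y ^ (m + 1 - (k + 1 + 1)) * ((m + 1).choose (k + 1 + 1) : ℤ) := by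
    intro k _
    rw [if_pos (by omega), max_eq_left (by omega)]
    ring
  simp only [nsmul_eq_mul, sum_congr rfl hterm]
  simp only [zero_add, ne_eq, not_true_eq_false, if_false, mul_zero, add_zero,
    Nat.choose_zero_right, Nat.choose_one_right, zero_ne_one, not_false_eq_true, if_true,
    Nat.sub_zero, pow_zero, pow_one,
    Nat.add_sub_cancel, max_eq_right zero_le_one, Nat.cast_one, Nat.cast_add]
  ring

open CycleGraph

/-- For the cycle `C_n` with `n ≥ 3`,
`Q(C_n,x,y) = (x+y)^n - x·y^{n-1}·(n-y) - y^n`. -/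
theorem cycle_bivariate (n : ℕ) (hn : 3 ≤ n) (x y : ℤ) :
    Q2 (SimpleGraph.cycleGraph n) x y
      = (x + y) ^ n - x * y ^ (n - 1) * ((n : ℤ) - y) - y ^ n := by
  have : NeZero n := ⟨by omega⟩
  have hn2 : 2 ≤ n := by omega
  have mem_connParts {P : Finset (Finset (Fin n))} :
      P ∈ connParts (cycleGraph n) ↔ IsConnPartition (cycleGraph n) P := by
    simp [connParts]
  calc Q2 (cycleGraph n) x y
      = ∑ T ∈ univ.filter (fun T : Finset (Fin n) => T.card ≠ 1),
          x ^ max T.card 1 * y ^ (n - T.card) := by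
        refine sum_nbij' starts (fun T => fibers (prevStart T)) (fun P hP => ?_) (fun T hT => ?_)
          (fun P hP => ?_) (fun T hT => ?_) (fun P hP => ?_)
        · exact mem_filter.2 ⟨mem_univ _, (mem_connParts.1 hP).card_starts_ne_one hn2⟩
        · exact mem_connParts.2 (isConnPartition_fibers_prevStart hn2 T)
        · exact ((mem_connParts.1 hP).eq_fibers_prevStart hn2).symm
        · exact starts_fibers_prevStart (mem_filter.1 hT).2
        · rw [card_intraEdges hn, ← card_fibers_prevStart,
            ← (mem_connParts.1 hP).eq_fibers_prevStart hn2]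
    _ = _ := by
      simpa only [Fintype.card_fin] using sum_pow_max_mul_pow_of_card_ne_one (ι := Fin n) x y
end
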